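/- arXiv:1407.1715 — 6 statements merged into one kernel-verified Lean document; each statement's English description precedes it below -/
import Mathlib

section
/- For every p ∈ (0,1) with q = 1−p and all u > 0, v > 0, one has 2·∫₀^∞ h(v, lp)·h(u, lq) dl = pq / (√(2π)·(p²u + q²v)^{3/2}). -/
open Real MeasureTheory

/-- `h s y` is the first-passage-time density of standard Brownian motion
started at `y`, evaluated at time `s`; by convention `h s y = 0` for `s ≤ 0`. -/
noncomputable def fptDensity (s y : ℝ) : ℝ :=
  if 0 < s then |y| / Real.sqrt (2 * Real.pi * s ^ 3) * Real.exp (-(y ^ 2) / (2 * s)) else 0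

theorem integral_localTime (p q : ℝ) (hp : p ∈ Set.Ioo (0:ℝ) 1) (hq : q = 1 - p)
    (u v : ℝ) (hu : 0 < u) (hv : 0 < v) :
    2 * ∫ l in Set.Ioi (0:ℝ), fptDensity v (l * p) * fptDensity u (l * q)
      = p * q / (Real.sqrt (2 * Real.pi) * (p ^ 2 * u + q ^ 2 * v) ^ ((3:ℝ)/2)) := by
  have hp0 : 0 < p := hp.1
  have hq0 : 0 < q := by rw [hq]; linarith [hp.2]
  have hπ : 0 < Real.pi := Real.pi_pos
  set a : ℝ := p ^ 2 / (2 * v) + q ^ 2 / (2 * u) with ha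
  have ha0 : 0 < a := by positivity
  set C : ℝ := p * q / (Real.sqrt (2 * Real.pi * v ^ 3) * Real.sqrt (2 * Real.pi * u ^ 3)) with hC
  have hcong : ∀ l ∈ Set.Ioi (0:ℝ),
      fptDensity v (l * p) * fptDensity u (l * q)
        = C * (l ^ (2:ℝ) * Real.exp (-a * l ^ (2:ℝ))) := by
    intro l hl
    have hl0 : 0 < l := hl
    have hl2 : l ^ (2:ℝ) = l ^ 2 := by
      rw [← Real.rpow_natCast l 2]; norm_num
    rw [fptDensity, fptDensity, if_pos hv, if_pos hu,
      abs_of_pos (mul_pos hl0 hp0), abs_of_pos (mul_pos hl0 hq0), hl2]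
    have hexp : Real.exp (-((l * p) ^ 2) / (2 * v)) * Real.exp (-((l * q) ^ 2) / (2 * u))
        = Real.exp (-a * l ^ 2) := by
      rw [← Real.exp_add]
      congr 1
      rw [ha]
      field_simp
      ring
    calc l * p / Real.sqrt (2 * Real.pi * v ^ 3) * Real.exp (-(l * p) ^ 2 / (2 * v)) *
          (l * q / Real.sqrt (2 * Real.pi * u ^ 3) * Real.exp (-(l * q) ^ 2 / (2 * u)))
        = l * p / Real.sqrt (2 * Real.pi * v ^ 3) * (l * q / Real.sqrt (2 * Real.pi * u ^ 3)) *
          (Real.exp (-(l * p) ^ 2 / (2 * v)) * Real.exp (-(l * q) ^ 2 / (2 * u))) := by ring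
      _ = C * (l ^ 2 * Real.exp (-a * l ^ 2)) := by rw [hexp, hC]; ring
  rw [setIntegral_congr_fun measurableSet_Ioi hcong, MeasureTheory.integral_const_mul,
    integral_rpow_mul_exp_neg_mul_rpow two_pos (by norm_num : (-1:ℝ) < 2) ha0]
  have hGamma : Real.Gamma (((2:ℝ) + 1) / 2) = Real.sqrt Real.pi / 2 := by
    rw [show ((2:ℝ) + 1) / 2 = 1 / 2 + 1 by norm_num, Real.Gamma_add_one (by norm_num),
      Real.Gamma_one_half_eq]
    ring
  have he32 : -((2:ℝ) + 1) / 2 = -((3:ℝ)/2) := by norm_num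
  rw [hGamma, he32]
  -- now pure algebra
  set S : ℝ := p ^ 2 * u + q ^ 2 * v with hS
  have hS0 : 0 < S := by positivity
  set A : ℝ := a ^ (-((3:ℝ)/2)) with hA
  set B : ℝ := S ^ ((3:ℝ)/2) with hB
  have hA0 : 0 < A := by rw [hA]; positivity
  have hB0 : 0 < B := by rw [hB]; positivity
  have hA2 : A ^ 2 = (a ^ 3)⁻¹ := by
    rw [hA, ← Real.rpow_natCast (a ^ (-((3:ℝ)/2))) 2, ← Real.rpow_mul ha0.le,
      ← Real.rpow_natCast a 3, ← Real.rpow_neg ha0.le]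
    norm_num
  have hB2 : B ^ 2 = S ^ 3 := by
    rw [hB, ← Real.rpow_natCast (S ^ ((3:ℝ)/2)) 2, ← Real.rpow_mul hS0.le,
      ← Real.rpow_natCast S 3]
    norm_num
  have h3 : Real.sqrt (2 * Real.pi * v ^ 3) ^ 2 = 2 * Real.pi * v ^ 3 :=
    Real.sq_sqrt (by positivity)
  have h4 : Real.sqrt (2 * Real.pi * u ^ 3) ^ 2 = 2 * Real.pi * u ^ 3 :=
    Real.sq_sqrt (by positivity)
  have h5 : Real.sqrt (2 * Real.pi) ^ 2 = 2 * Real.pi := Real.sq_sqrt (by positivity)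
  have h6 : Real.sqrt Real.pi ^ 2 = Real.pi := Real.sq_sqrt hπ.le
  have hkey : 2 * S ^ 3 = 16 * a ^ 3 * u ^ 3 * v ^ 3 := by
    have h2auv : 2 * a * u * v = S := by rw [ha, hS]; field_simp
    calc 2 * S ^ 3 = 2 * (2 * a * u * v) ^ 3 := by rw [h2auv]
      _ = 16 * a ^ 3 * u ^ 3 * v ^ 3 := by ring
  have hLpos : (0:ℝ) ≤ 2 * (C * (A * (1 / 2) * (Real.sqrt Real.pi / 2))) := by
    have hC0 : 0 ≤ C := by rw [hC]; positivity
    positivity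
  have hRpos : (0:ℝ) ≤ p * q / (Real.sqrt (2 * Real.pi) * B) := by positivity
  have hsq : (2 * (C * (A * (1 / 2) * (Real.sqrt Real.pi / 2)))) ^ 2
      = (p * q / (Real.sqrt (2 * Real.pi) * B)) ^ 2 := by
    have hL : (2 * (C * (A * (1 / 2) * (Real.sqrt Real.pi / 2)))) ^ 2
        = (p * q) ^ 2 * (Real.sqrt Real.pi) ^ 2 * A ^ 2
            / (2 ^ 2 * (Real.sqrt (2 * Real.pi * v ^ 3)) ^ 2
              * (Real.sqrt (2 * Real.pi * u ^ 3)) ^ 2) := by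
      rw [hC]; ring
    have hR : (p * q / (Real.sqrt (2 * Real.pi) * B)) ^ 2
        = (p * q) ^ 2 / ((Real.sqrt (2 * Real.pi)) ^ 2 * B ^ 2) := by ring
    rw [hL, hR, hA2, hB2, h3, h4, h5, h6]
    have ha3 : (a:ℝ) ^ 3 ≠ 0 := by positivity
    have hS3 : (S:ℝ) ^ 3 ≠ 0 := by positivity
    have hu3 : (u:ℝ) ^ 3 ≠ 0 := by positivity
    have hv3 : (v:ℝ) ^ 3 ≠ 0 := by positivity
    have hπ0 : Real.pi ≠ 0 := hπ.ne'
    clear_value A B C a S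
    field_simp
    linear_combination (1 / 2 : ℝ) * hkey
  calc 2 * (C * (A * (1 / 2) * (Real.sqrt Real.pi / 2)))
      = Real.sqrt ((2 * (C * (A * (1 / 2) * (Real.sqrt Real.pi / 2)))) ^ 2) :=
        (Real.sqrt_sq hLpos).symm
    _ = Real.sqrt ((p * q / (Real.sqrt (2 * Real.pi) * B)) ^ 2) := by rw [hsq]
    _ = p * q / (Real.sqrt (2 * Real.pi) * B) := Real.sqrt_sq hRpos
end

section
/- For every t > 0, y ≥ 0, k > 0 and α ∈ ℝ, one has ∫_k^∞ h(t, y + x)·e^{αx} dx = (1/√(2π t))·exp(αk − (y+k)²/(2t)) + α·exp(t α²/2 − α y)·( 1 − Φ( (y+k)/√t − α√t ) ). -/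
open Real MeasureTheory Filter Set Topology intervalIntegral

/-- The cumulative distribution function of the standard normal distribution. -/
noncomputable def stdCDF (z : ℝ) : ℝ :=
  ∫ y in Set.Iic z, Real.exp (-(y ^ 2) / 2) / Real.sqrt (2 * Real.pi)


noncomputable def phi (x : ℝ) : ℝ := Real.exp (-(x ^ 2) / 2) / Real.sqrt (2 * Real.pi)

lemma phi_cont : Continuous phi := by
  unfold phi; fun_prop

lemma phi_integrable : Integrable phi := by
  have h : Integrable (fun x : ℝ => Real.exp (-(1/2 : ℝ) * x ^ 2)) :=
    integrable_exp_neg_mul_sq (by norm_num)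
  have h2 := h.div_const (Real.sqrt (2 * Real.pi))
  refine h2.congr ?_
  filter_upwards with x
  unfold phi
  ring_nf

lemma stdCDF_eq (z : ℝ) : stdCDF z = stdCDF 0 + ∫ x in (0:ℝ)..z, phi x := by
  have h := intervalIntegral.integral_Iic_sub_Iic (phi_integrable.integrableOn (s := Iic (0:ℝ)))
    (phi_integrable.integrableOn (s := Iic z))
  have e : ∀ w : ℝ, stdCDF w = ∫ y in Set.Iic w, phi y := fun w => rfl
  rw [e z, e 0]
  linarith [h]

lemma hasDerivAt_stdCDF (z : ℝ) : HasDerivAt stdCDF (phi z) z := by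
  have h : HasDerivAt (fun u => ∫ x in (0:ℝ)..u, phi x) (phi z) z := by
    refine intervalIntegral.integral_hasDerivAt_right
      (phi_integrable.intervalIntegrable) ?_ phi_cont.continuousAt
    exact phi_cont.stronglyMeasurableAtFilter _ _
  have := (h.const_add (stdCDF 0))
  refine this.congr_of_eventuallyEq ?_
  filter_upwards with x using (stdCDF_eq x)

lemma integral_phi : ∫ x, phi x = 1 := by
  have h : ∫ x : ℝ, Real.exp (-(1/2 : ℝ) * x ^ 2) = Real.sqrt (2 * Real.pi) := by
    rw [integral_gaussian]
    rw [show Real.pi / (1/2) = 2 * Real.pi by ring]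
  have hne : Real.sqrt (2 * Real.pi) ≠ 0 := by positivity
  unfold phi
  rw [MeasureTheory.integral_div]
  rw [show (fun x : ℝ => Real.exp (-(x ^ 2) / 2)) = fun x : ℝ => Real.exp (-(1/2:ℝ) * x ^ 2) by
    funext x; ring_nf]
  rw [h, div_self hne]

lemma tendsto_stdCDF : Tendsto stdCDF atTop (𝓝 1) := by
  have h1 : Tendsto (fun z => ∫ x in (0:ℝ)..z, phi x) atTop (𝓝 (∫ x in Set.Ioi (0:ℝ), phi x)) :=
    intervalIntegral_tendsto_integral_Ioi 0 phi_integrable.integrableOn tendsto_id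
  have h2 : stdCDF 0 + ∫ x in Set.Ioi (0:ℝ), phi x = 1 := by
    rw [← integral_phi]
    exact intervalIntegral.integral_Iic_add_Ioi phi_integrable.integrableOn phi_integrable.integrableOn
  have := h1.const_add (stdCDF 0)
  rw [h2] at this
  refine this.congr ?_
  intro x; exact (stdCDF_eq x).symm

theorem integral_h_exp_eq (t y k α : ℝ) (ht : 0 < t) (hy : 0 ≤ y) (hk : 0 < k) :
    ∫ x in Set.Ioi k, fptDensity t (y + x) * Real.exp (α * x)
      = 1 / Real.sqrt (2 * Real.pi * t) * Real.exp (α * k - (y + k) ^ 2 / (2 * t))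
        + α * Real.exp (t * α ^ 2 / 2 - α * y)
            * (1 - stdCDF ((y + k) / Real.sqrt t - α * Real.sqrt t)) := by
  set s := Real.sqrt t with hs_def
  have hs : 0 < s := Real.sqrt_pos.mpr ht
  have hs2 : s ^ 2 = t := Real.sq_sqrt ht.le
  have h2pi : (0:ℝ) < 2 * Real.pi := by positivity
  have hC : 0 < Real.sqrt (2 * Real.pi * t) := by positivity
  have hsq : (0:ℝ) < Real.sqrt (2 * Real.pi) := by positivity
  have hCmul : Real.sqrt (2 * Real.pi * t) = Real.sqrt (2 * Real.pi) * s := by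
    rw [hs_def, ← Real.sqrt_mul h2pi.le]
  set c := α * Real.exp (t * α ^ 2 / 2 - α * y) with hc
  set g : ℝ → ℝ := fun x =>
    -(1 / Real.sqrt (2 * Real.pi * t) * Real.exp (α * x - (y + x) ^ 2 / (2 * t))
      + c * (1 - stdCDF ((y + x) / s - α * s))) with hg
  have h3 : Real.sqrt (2 * Real.pi * t ^ 3) = Real.sqrt (2 * Real.pi * t) * t := by
    rw [show 2 * Real.pi * t ^ 3 = (2 * Real.pi * t) * t ^ 2 by ring,
      Real.sqrt_mul (by positivity), Real.sqrt_sq ht.le]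
  have hderiv : ∀ x ∈ Set.Ici k, HasDerivAt g (fptDensity t (y + x) * Real.exp (α * x)) x := by
    intro x hx
    have hyx : 0 < y + x := by
      have : k ≤ x := hx
      linarith
    have h1 : HasDerivAt (fun x : ℝ => α * x) α x := by
      simpa using (hasDerivAt_id x).const_mul α
    have h2 : HasDerivAt (fun x : ℝ => (y + x) ^ 2 / (2 * t)) ((y + x) / t) x := by
      have := (((hasDerivAt_id' x).const_add y).fun_pow 2).div_const (2 * t)
      refine this.congr_deriv (Eq.symm ?_)
      field_simp
      ring
    have hu := (h1.fun_sub h2).exp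
    have hz : HasDerivAt (fun x : ℝ => (y + x) / s - α * s) (1 / s) x := by
      have := (((hasDerivAt_id x).const_add y).div_const s).sub_const (α * s)
      simpa [one_div] using this
    have hΦ : HasDerivAt (fun x : ℝ => stdCDF ((y + x) / s - α * s))
        (phi ((y + x) / s - α * s) * (1 / s)) x := (hasDerivAt_stdCDF _).comp x hz
    have hG := ((hu.const_mul (1 / Real.sqrt (2 * Real.pi * t))).fun_add
      ((hΦ.const_sub 1).const_mul c)).fun_neg
    rw [hg]
    refine hG.congr_deriv (Eq.symm ?_)
    have hQ : Real.exp (-(((y + x) / s - α * s) ^ 2) / 2)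
        = Real.exp (α * x - (y + x) ^ 2 / (2 * t)) / Real.exp (t * α ^ 2 / 2 - α * y) := by
      rw [eq_div_iff (Real.exp_ne_zero _), ← Real.exp_add]
      congr 1
      rw [← hs2]
      field_simp
      ring
    have hE : Real.exp (α * x - (y + x) ^ 2 / (2 * t))
        = Real.exp (-((y + x) ^ 2) / (2 * t)) * Real.exp (α * x) := by
      rw [← Real.exp_add]; congr 1; ring
    rw [fptDensity, if_pos ht, abs_of_pos hyx, h3, phi, hQ, hc, hE, hCmul]
    field_simp
    ring
  have hnonneg : ∀ x ∈ Set.Ioi k, 0 ≤ fptDensity t (y + x) * Real.exp (α * x) := by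
    intro x _
    rw [fptDensity, if_pos ht]
    positivity
  have T1 : Tendsto (fun x => Real.exp (α * x - (y + x) ^ 2 / (2 * t))) atTop (𝓝 0) := by
    apply Real.tendsto_exp_atBot.comp
    have h1 : Tendsto (fun x : ℝ => (y + x) * (α - (y + x) / (2 * t)) - α * y) atTop atBot := by
      apply tendsto_atBot_add_const_right
      apply Tendsto.atTop_mul_atBot₀
      · exact tendsto_atTop_add_const_left _ y tendsto_id
      · have hd : Tendsto (fun x : ℝ => (y + x) / (2 * t)) atTop atTop :=
          (tendsto_atTop_add_const_left _ y tendsto_id).atTop_div_const (by positivity)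
        have := tendsto_atBot_add_const_left atTop α (tendsto_neg_atTop_atBot.comp hd)
        refine this.congr ?_
        intro x; simp [sub_eq_add_neg]
    refine h1.congr ?_
    intro x
    field_simp
    ring
  have T2 : Tendsto (fun x : ℝ => stdCDF ((y + x) / s - α * s)) atTop (𝓝 1) := by
    apply tendsto_stdCDF.comp
    have hd : Tendsto (fun x : ℝ => (y + x) / s) atTop atTop :=
      (tendsto_atTop_add_const_left _ y tendsto_id).atTop_div_const hs
    have := tendsto_atTop_add_const_right atTop (-(α * s)) hd
    refine this.congr ?_
    intro x; ring
  have hlim : Tendsto g atTop (𝓝 0) := by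
    have := ((T1.const_mul (1 / Real.sqrt (2 * Real.pi * t))).add
      ((T2.const_sub 1).const_mul c)).neg
    rw [hg]
    convert this using 2
    norm_num
  have key := integral_Ioi_of_hasDerivAt_of_nonneg' hderiv hnonneg hlim
  rw [key, hg]
  ring
end

section
/- For every T > 0 and every x ≠ 0, one has ∫₀^T h(t, x)·(1/√(2π(T−t))) dt = (1/√(2π T))·exp(−x²/(2T)); that is, the convolution of the first-passage density h(·, x) with the centered Gaussian transition density at 0 equals the Gaussian density at x. -/
open Real MeasureTheory

theorem fpt_conv_gaussian (T x : ℝ) (hT : 0 < T) (hx : x ≠ 0) :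
    ∫ t in (0:ℝ)..T, fptDensity t x * (1 / Real.sqrt (2 * Real.pi * (T - t)))
      = 1 / Real.sqrt (2 * Real.pi * T) * Real.exp (-(x ^ 2) / (2 * T)) := by
  have hπ := Real.pi_pos
  have hx2 : 0 < x ^ 2 := by positivity
  have hax : 0 < |x| := abs_pos.mpr hx
  set C : ℝ := Real.exp (-(x ^ 2) / (2 * T)) / (Real.pi * Real.sqrt T) with hC
  set f : ℝ → ℝ := fun t => |x| * Real.sqrt (t⁻¹ - T⁻¹) with hfdef
  set f' : ℝ → ℝ := fun t => -(|x| / (2 * t ^ 2 * Real.sqrt (t⁻¹ - T⁻¹))) with hf'def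
  have hpos : ∀ t ∈ Set.Ioo (0:ℝ) T, 0 < t⁻¹ - T⁻¹ := by
    intro t ht
    have h1 : T⁻¹ < t⁻¹ := by
      rw [inv_lt_inv₀ hT ht.1]
      exact ht.2
    linarith
  have hderiv : ∀ t ∈ Set.Ioo (0:ℝ) T, HasDerivWithinAt f (f' t) (Set.Ioo 0 T) t := by
    intro t ht
    have ht0 : (0:ℝ) < t := ht.1
    have hy : 0 < t⁻¹ - T⁻¹ := hpos t ht
    have hsy : 0 < Real.sqrt (t⁻¹ - T⁻¹) := Real.sqrt_pos.mpr hy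
    have h1 : HasDerivAt (fun s : ℝ => s⁻¹ - T⁻¹) (-(t ^ 2)⁻¹) t :=
      (hasDerivAt_inv ht0.ne').sub_const T⁻¹
    have h2 := (h1.sqrt hy.ne').const_mul |x|
    have h3 : HasDerivAt f (f' t) t := by
      refine h2.congr_deriv ?_
      rw [hf'def]
      field_simp
    exact h3.hasDerivWithinAt
  have hsq : ∀ t ∈ Set.Ioo (0:ℝ) T, (f t) ^ 2 = x ^ 2 * (t⁻¹ - T⁻¹) := by
    intro t ht
    rw [hfdef]
    simp only
    rw [mul_pow, sq_abs, Real.sq_sqrt (hpos t ht).le]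
  have hinj : Set.InjOn f (Set.Ioo 0 T) := by
    intro a ha b hb hab
    have h1 : x ^ 2 * (a⁻¹ - T⁻¹) = x ^ 2 * (b⁻¹ - T⁻¹) := by
      rw [← hsq a ha, ← hsq b hb, hab]
    have h2 : a⁻¹ - T⁻¹ = b⁻¹ - T⁻¹ := mul_left_cancel₀ hx2.ne' h1
    have h3 : a⁻¹ = b⁻¹ := by linarith
    exact inv_injective h3
  have himg : f '' Set.Ioo 0 T = Set.Ioi 0 := by
    ext u
    constructor
    · rintro ⟨t, ht, rfl⟩
      exact mul_pos hax (Real.sqrt_pos.mpr (hpos t ht))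
    · intro hu
      have hu0 : 0 < u := hu
      have hden : 0 < u ^ 2 * T + x ^ 2 := by positivity
      refine ⟨x ^ 2 * T / (u ^ 2 * T + x ^ 2), ⟨by positivity, ?_⟩, ?_⟩
      · rw [div_lt_iff₀ hden]
        nlinarith [mul_pos (pow_pos hu0 2) (pow_pos hT 2)]
      · have h1 : (x ^ 2 * T / (u ^ 2 * T + x ^ 2))⁻¹ - T⁻¹ = u ^ 2 / x ^ 2 := by
          field_simp
          ring
        rw [hfdef]
        simp only
        rw [h1, Real.sqrt_div (sq_nonneg u), Real.sqrt_sq_eq_abs, Real.sqrt_sq_eq_abs,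
          abs_of_pos hu0]
        field_simp
  have key := integral_image_eq_integral_abs_deriv_smul measurableSet_Ioo hderiv hinj
      (fun u => C * Real.exp (-(1 / 2) * u ^ 2))
  rw [himg] at key
  have heq : Set.EqOn (fun t => fptDensity t x * (1 / Real.sqrt (2 * Real.pi * (T - t))))
      (fun t => |f' t| • (C * Real.exp (-(1 / 2) * (f t) ^ 2))) (Set.Ioo 0 T) := by
    intro t ht
    have ht0 : (0:ℝ) < t := ht.1
    have htT : 0 < T - t := sub_pos.mpr ht.2
    have hy : 0 < t⁻¹ - T⁻¹ := hpos t ht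
    have hsy : 0 < Real.sqrt (t⁻¹ - T⁻¹) := Real.sqrt_pos.mpr hy
    have hst : 0 < Real.sqrt t := Real.sqrt_pos.mpr ht0
    have hsT : 0 < Real.sqrt T := Real.sqrt_pos.mpr hT
    have hstt : 0 < Real.sqrt (T - t) := Real.sqrt_pos.mpr htT
    have hs2π : 0 < Real.sqrt (2 * Real.pi) := Real.sqrt_pos.mpr (by positivity)
    simp only
    rw [fptDensity, if_pos ht0, smul_eq_mul, hsq t ht]
    have habs : |f' t| = |x| / (2 * t ^ 2 * Real.sqrt (t⁻¹ - T⁻¹)) := by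
      rw [hf'def]
      simp only
      rw [abs_neg, abs_of_nonneg (by positivity)]
    rw [habs]
    have hexp : Real.exp (-(1 / 2) * (x ^ 2 * (t⁻¹ - T⁻¹)))
        = Real.exp (-(x ^ 2) / (2 * t)) * Real.exp (x ^ 2 / (2 * T)) := by
      rw [← Real.exp_add]
      congr 1
      field_simp
      ring
    rw [hexp, hC]
    have hCexp : Real.exp (-(x ^ 2) / (2 * T)) * Real.exp (x ^ 2 / (2 * T)) = 1 := by
      rw [← Real.exp_add, ← add_div]
      norm_num
    -- sqrt identities
    have hy' : Real.sqrt (t⁻¹ - T⁻¹) = Real.sqrt (T - t) / (Real.sqrt t * Real.sqrt T) := by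
      have h1 : t⁻¹ - T⁻¹ = (T - t) / (t * T) := by field_simp
      rw [h1, Real.sqrt_div htT.le, Real.sqrt_mul ht0.le]
    have h3 : Real.sqrt (2 * Real.pi * t ^ 3) = Real.sqrt (2 * Real.pi) * (t * Real.sqrt t) := by
      rw [Real.sqrt_mul (by positivity), show t ^ 3 = t ^ 2 * t by ring,
        Real.sqrt_mul (sq_nonneg t), Real.sqrt_sq ht0.le]
    have h4 : Real.sqrt (2 * Real.pi * (T - t)) = Real.sqrt (2 * Real.pi) * Real.sqrt (T - t) := by
      rw [Real.sqrt_mul (by positivity)]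
    have h2π : Real.sqrt (2 * Real.pi) ^ 2 = 2 * Real.pi := Real.sq_sqrt (by positivity)
    have hst2 : Real.sqrt t ^ 2 = t := Real.sq_sqrt ht0.le
    have hmul : Real.sqrt (2 * Real.pi) * Real.sqrt (2 * Real.pi) = 2 * Real.pi :=
      Real.mul_self_sqrt (by positivity)
    rw [hy', h3, h4]
    have he : Real.exp (-x ^ 2 / (2 * T)) * (Real.exp (-x ^ 2 / (2 * t)) * Real.exp (x ^ 2 / (2 * T)))
        = Real.exp (-x ^ 2 / (2 * t)) := by
      rw [← Real.exp_add, ← Real.exp_add]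
      congr 1
      field_simp
      ring
    have s2 : Real.sqrt 2 ^ 2 = 2 := Real.sq_sqrt (by norm_num)
    have sπ : Real.sqrt Real.pi ^ 2 = Real.pi := Real.sq_sqrt hπ.le
    field_simp
    rw [mul_assoc _ (Real.exp _), ← Real.exp_add, neg_add_cancel, Real.exp_zero, mul_one, h2π,
      hst2]
  rw [intervalIntegral.integral_of_le hT.le, MeasureTheory.integral_Ioc_eq_integral_Ioo,
    MeasureTheory.setIntegral_congr_fun measurableSet_Ioo heq, ← key,
    MeasureTheory.integral_const_mul, integral_gaussian_Ioi]
  have h5 : Real.pi / (1 / 2) = 2 * Real.pi := by ring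
  rw [h5, hC]
  have hT' : Real.sqrt (2 * Real.pi * T) = Real.sqrt (2 * Real.pi) * Real.sqrt T := by
    rw [Real.sqrt_mul (by positivity)]
  have h2π : Real.sqrt (2 * Real.pi) ^ 2 = 2 * Real.pi := Real.sq_sqrt (by positivity)
  have hs2π : 0 < Real.sqrt (2 * Real.pi) := Real.sqrt_pos.mpr (by positivity)
  have hsT : 0 < Real.sqrt T := Real.sqrt_pos.mpr hT
  have hmul : Real.sqrt (2 * Real.pi) * Real.sqrt (2 * Real.pi) = 2 * Real.pi :=
    Real.mul_self_sqrt (by positivity)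
  rw [hT']
  have s2 : Real.sqrt 2 ^ 2 = 2 := Real.sq_sqrt (by norm_num)
  have sπ : Real.sqrt Real.pi ^ 2 = Real.pi := Real.sq_sqrt hπ.le
  field_simp
  linear_combination h2π
end

section
/- For every p ∈ (0,1) and T > 0, the function ψ_{p,T}(t, v, x, l) = 2a(x)·h(v, lp)·h(t−v, lq)·h(T−t, x) is a probability density: ∫₀^T ∫₀^t ∫₀^∞ ∫_ℝ ψ_{p,T}(t, v, x, l) dx dl dv dt = 1. -/
open Real MeasureTheory

/-- `a x = p` if `x ≥ 0` and `a x = q = 1 − p` if `x < 0`. -/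
noncomputable def aFun (p x : ℝ) : ℝ := if 0 ≤ x then p else 1 - p

/-- The joint density `ψ_{p,T}(t, v, x, l) = 2 a(x) h(v, lp) h(t−v, lq) h(T−t, x)`. -/
noncomputable def psiDensity (p T t v x l : ℝ) : ℝ :=
  2 * aFun p x * fptDensity v (l * p) * fptDensity (t - v) (l * (1 - p))
    * fptDensity (T - t) x

lemma sqa {A B : ℝ} (hA : 0 ≤ A) (hB : 0 ≤ B) (h : A^2 = B^2) : A = B := by
  nlinarith [sq_nonneg (A - B), sq_nonneg (A + B)]

lemma int1 {b : ℝ} (hb : 0 < b) :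
    ∫ x in Set.Ioi (0:ℝ), x * Real.exp (-b * x^2) = (2*b)⁻¹ := by
  have h := integral_rpow_mul_exp_neg_mul_rpow (p := 2) (q := 1) (b := b)
    two_pos (by norm_num) hb
  have h2 : ∫ x in Set.Ioi (0:ℝ), x * Real.exp (-b * x^2)
      = ∫ x in Set.Ioi (0:ℝ), x ^ (1:ℝ) * Real.exp (-b * x ^ (2:ℝ)) := by
    refine setIntegral_congr_fun measurableSet_Ioi (fun x hx => ?_)
    rw [Real.rpow_one, show ((2:ℝ) = ((2:ℕ):ℝ)) by norm_num, Real.rpow_natCast]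
  rw [h2, h, show -((1:ℝ)+1)/2 = -1 by norm_num, Real.rpow_neg_one,
    show ((1:ℝ)+1)/2 = 1 by norm_num, Real.Gamma_one]
  rw [mul_inv]
  ring

lemma int2 {b : ℝ} (hb : 0 < b) :
    ∫ x in Set.Ioi (0:ℝ), x^2 * Real.exp (-b * x^2)
      = Real.sqrt π * (4 * (b * Real.sqrt b))⁻¹ := by
  have h := integral_rpow_mul_exp_neg_mul_rpow (p := 2) (q := 2) (b := b)
    two_pos (by norm_num) hb
  have h2 : ∫ x in Set.Ioi (0:ℝ), x^2 * Real.exp (-b * x^2)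
      = ∫ x in Set.Ioi (0:ℝ), x ^ (2:ℝ) * Real.exp (-b * x ^ (2:ℝ)) := by
    refine setIntegral_congr_fun measurableSet_Ioi (fun x hx => ?_)
    rw [show ((2:ℝ) = ((2:ℕ):ℝ)) by norm_num, Real.rpow_natCast]
  have hb' : Real.sqrt b ≠ 0 := (Real.sqrt_pos.mpr hb).ne'
  rw [h2, h, show ((2:ℝ)+1)/2 = 1/2 + 1 by norm_num,
    show -((2:ℝ)+1)/2 = -(1 + 1/2) by norm_num,
    Real.Gamma_add_one (by norm_num), Real.Gamma_one_half_eq,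
    Real.rpow_neg hb.le, Real.rpow_add hb, Real.rpow_one, ← Real.sqrt_eq_rpow]
  field_simp
  ring

lemma xlemma {s : ℝ} (hs : 0 < s) (p : ℝ) :
    ∫ x : ℝ, aFun p x * fptDensity s x = (Real.sqrt (2 * π * s))⁻¹ := by
  set K := Real.sqrt (2 * π * s ^ 3) with hK
  have hKpos : 0 < K := Real.sqrt_pos.mpr (by positivity)
  set b := (2*s)⁻¹ with hb
  have hbpos : 0 < b := by positivity
  have hexp : ∀ x : ℝ, Real.exp (-(x^2)/(2*s)) = Real.exp (-b * x^2) := by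
    intro x; congr 1; rw [hb]; field_simp
  have h1 : Integrable (fun x : ℝ => x * Real.exp (-b * x^2)) :=
    integrable_mul_exp_neg_mul_sq hbpos
  have hint : Integrable (fun x : ℝ => aFun p x * fptDensity s x) := by
    refine (((h1.abs).const_mul ((|p| + |1-p|) * K⁻¹)).mono' ?_ ?_)
    · apply AEStronglyMeasurable.mul
      · exact (Measurable.ite measurableSet_Ici measurable_const
          measurable_const).aestronglyMeasurable
      · apply Continuous.aestronglyMeasurable
        unfold fptDensity
        simp only [if_pos hs]
        fun_prop
    · refine Filter.Eventually.of_forall (fun x => ?_)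
      have hfpt : |fptDensity s x| = |x| / K * Real.exp (-b*x^2) := by
        rw [fptDensity, if_pos hs, hexp x, abs_mul, abs_div, abs_abs,
          abs_of_pos hKpos, Real.abs_exp]
      rw [Real.norm_eq_abs, abs_mul, hfpt]
      have h2 : |aFun p x| ≤ |p| + |1-p| := by
        rw [aFun]; split
        · simp [abs_nonneg]
        · simp [abs_nonneg]
      calc |aFun p x| * (|x| / K * Real.exp (-b*x^2))
          ≤ (|p| + |1-p|) * (|x| / K * Real.exp (-b*x^2)) := by
            apply mul_le_mul_of_nonneg_right h2 (by positivity)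
        _ = (|p| + |1-p|) * K⁻¹ * |x * Real.exp (-b*x^2)| := by
            rw [abs_mul, Real.abs_exp]; ring
  rw [← integral_add_compl (measurableSet_Ioi : MeasurableSet (Set.Ioi (0:ℝ))) hint,
    Set.compl_Ioi]
  have hinv : (2*b)⁻¹ = s := by rw [hb]; field_simp
  have hA : ∫ x in Set.Ioi (0:ℝ), aFun p x * fptDensity s x = p * (K⁻¹ * s) := by
    rw [setIntegral_congr_fun measurableSet_Ioi
      (g := fun x => (p * K⁻¹) * (x * Real.exp (-b*x^2)))
      (fun x hx => by
        have hx' : (0:ℝ) ≤ x := le_of_lt hx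
        simp only [aFun, fptDensity, if_pos hs, if_pos hx', hexp x, abs_of_nonneg hx']
        ring)]
    rw [integral_const_mul, int1 hbpos, hinv]; ring
  have hB : ∫ x in Set.Iic (0:ℝ), aFun p x * fptDensity s x = (1-p) * (K⁻¹ * s) := by
    rw [setIntegral_congr_fun measurableSet_Iic
      (g := fun x => ((1-p) * K⁻¹) * ((fun y => y * Real.exp (-b*y^2)) (-x)))
      (fun x hx => by
        rcases lt_or_eq_of_le (Set.mem_Iic.mp hx) with h0 | h0
        · simp only [aFun, fptDensity, if_pos hs, if_neg (not_le.mpr h0), hexp x,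
            abs_of_neg h0]
          rw [← hK]
          ring
        · subst h0
          simp [aFun, fptDensity])]
    have hneg := integral_comp_neg_Iic (0:ℝ) (fun y => y * Real.exp (-b*y^2))
    simp only [neg_zero] at hneg
    rw [integral_const_mul, hneg, int1 hbpos, hinv]; ring
  rw [hA, hB]
  have hKs : K = Real.sqrt (2 * π * s) * s := by
    apply sqa hKpos.le (by positivity)
    rw [mul_pow, Real.sq_sqrt (show (0:ℝ) ≤ 2 * π * s by positivity), hK,
      Real.sq_sqrt (show (0:ℝ) ≤ 2 * π * s ^ 3 by positivity)]
    ring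
  rw [hKs]
  have h3 : Real.sqrt (2 * π * s) ≠ 0 := by positivity
  field_simp
  ring

lemma llemma {p v w : ℝ} (hp : 0 < p) (hp1 : p < 1) (hv : 0 < v) (hw : 0 < w) :
    ∫ l in Set.Ioi (0:ℝ), fptDensity v (l*p) * fptDensity w (l*(1-p))
      = p*(1-p) / (2*Real.sqrt (2*π))
          * ((p^2*w + (1-p)^2*v) * Real.sqrt (p^2*w + (1-p)^2*v))⁻¹ := by
  have hq : 0 < 1 - p := by linarith
  have hD : 0 < p^2*w + (1-p)^2*v := by
    nlinarith [mul_pos (pow_pos hp 2) hw, mul_nonneg (sq_nonneg (1-p)) hv.le]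
  have hα : 0 < (p^2*w + (1-p)^2*v) / (2*v*w) := by positivity
  have hK1 : (0:ℝ) < Real.sqrt (2 * π * v ^ 3) := Real.sqrt_pos.mpr (by positivity)
  have hK2 : (0:ℝ) < Real.sqrt (2 * π * w ^ 3) := Real.sqrt_pos.mpr (by positivity)
  rw [setIntegral_congr_fun measurableSet_Ioi
    (g := fun l => (p*(1-p) * (Real.sqrt (2 * π * v ^ 3) * Real.sqrt (2 * π * w ^ 3))⁻¹)
      * (l^2 * Real.exp (-((p^2*w + (1-p)^2*v) / (2*v*w)) * l^2)))
    (fun l hl => by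
      have hl' : (0:ℝ) < l := hl
      have e1 : Real.exp (-((l*p)^2)/(2*v)) * Real.exp (-((l*(1-p))^2)/(2*w))
          = Real.exp (-((p^2*w + (1-p)^2*v) / (2*v*w)) * l^2) := by
        rw [← Real.exp_add]; congr 1; field_simp; ring
      simp only [fptDensity, if_pos hv, if_pos hw,
        abs_of_pos (mul_pos hl' hp), abs_of_pos (mul_pos hl' hq)]
      rw [← e1]
      field_simp)]
  rw [integral_const_mul, int2 hα]
  apply sqa (by positivity) (by positivity)
  simp only [mul_pow, inv_pow, div_pow]
  rw [Real.sq_sqrt (le_of_lt (show (0:ℝ) < 2 * π * v ^ 3 by positivity)),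
    Real.sq_sqrt (le_of_lt (show (0:ℝ) < 2 * π * w ^ 3 by positivity)),
    Real.sq_sqrt Real.pi_pos.le, Real.sq_sqrt hα.le, Real.sq_sqrt hD.le,
    Real.sq_sqrt (show (0:ℝ) ≤ 2*π by positivity)]
  have hπ := Real.pi_pos
  field_simp
  ring

lemma vlemma {p t : ℝ} (hp : 0 < p) (hp1 : p < 1) (ht : 0 < t) :
    ∫ v in (0:ℝ)..t, ((p^2*(t-v) + (1-p)^2*v) * Real.sqrt (p^2*(t-v) + (1-p)^2*v))⁻¹
      = 2 / (p*(1-p)*Real.sqrt t) := by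
  have hq : 0 < 1 - p := by linarith
  have hD : ∀ v ∈ Set.uIcc (0:ℝ) t, 0 < p^2*(t-v) + (1-p)^2*v := by
    intro v hv
    rw [Set.uIcc_of_le ht.le] at hv
    obtain ⟨hv0, hvt⟩ := hv
    rcases le_total (p^2) ((1-p)^2) with h | h
    · nlinarith [pow_pos hp 2]
    · nlinarith [pow_pos hq 2]
  have hcont : IntervalIntegrable
      (fun v => ((p^2*(t-v) + (1-p)^2*v) * Real.sqrt (p^2*(t-v) + (1-p)^2*v))⁻¹)
      volume 0 t := by
    apply ContinuousOn.intervalIntegrable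
    apply ContinuousOn.inv₀
    · exact (((continuous_const.mul (continuous_const.sub continuous_id)).add
        (continuous_const.mul continuous_id)).continuousOn).mul
        (Real.continuous_sqrt.comp_continuousOn
          (((continuous_const.mul (continuous_const.sub continuous_id)).add
            (continuous_const.mul continuous_id)).continuousOn))
    · intro v hv
      exact ne_of_gt (mul_pos (hD v hv) (Real.sqrt_pos.mpr (hD v hv)))
  by_cases hc : p = 1/2
  · subst hc
    have harg : ∀ v : ℝ, (1/2:ℝ)^2*(t-v) + (1-1/2)^2*v = t/4 := fun v => by ring
    simp only [harg]
    rw [intervalIntegral.integral_const, smul_eq_mul, sub_zero]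
    apply sqa (by positivity) (by positivity)
    simp only [mul_pow, inv_pow, div_pow]
    rw [Real.sq_sqrt (by positivity : (0:ℝ) ≤ t/4), Real.sq_sqrt ht.le]
    field_simp
    ring
  · have hcne : ((1:ℝ)-p)^2 - p^2 ≠ 0 := by
      intro h; apply hc; nlinarith
    have hF : ∀ v ∈ Set.uIcc (0:ℝ) t,
        HasDerivAt (fun u => -2/(((1:ℝ)-p)^2 - p^2)
            * (Real.sqrt (p^2*(t-u) + (1-p)^2*u))⁻¹)
          (((p^2*(t-v) + (1-p)^2*v) * Real.sqrt (p^2*(t-v) + (1-p)^2*v))⁻¹) v := by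
      intro v hv
      have hGpos := hD v hv
      have hsq : (0:ℝ) < Real.sqrt (p^2*(t-v) + (1-p)^2*v) := Real.sqrt_pos.mpr hGpos
      have hg : HasDerivAt (fun u : ℝ => p^2*(t-u) + (1-p)^2*u) (((1:ℝ)-p)^2 - p^2) v := by
        have h1 : HasDerivAt (fun u : ℝ => p^2*(t-u) + (1-p)^2*u)
            (p^2 * (0 - 1) + (1-p)^2 * 1) v :=
          (((hasDerivAt_const v t).sub (hasDerivAt_id v)).const_mul _).add
            ((hasDerivAt_id v).const_mul _)
        convert h1 using 1; ring
      have hsqrt : HasDerivAt (fun u => Real.sqrt (p^2*(t-u) + (1-p)^2*u))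
          (1 / (2 * Real.sqrt (p^2*(t-v) + (1-p)^2*v)) * ((((1:ℝ)-p)^2 - p^2))) v :=
        (Real.hasDerivAt_sqrt hGpos.ne').comp v hg
      have hinv := (hsqrt.inv hsq.ne').const_mul (-2/(((1:ℝ)-p)^2 - p^2))
      refine hinv.congr_deriv ?_
      rw [Real.sq_sqrt hGpos.le]
      field_simp
    rw [intervalIntegral.integral_eq_sub_of_hasDerivAt hF hcont]
    have h1 : p^2*(t-t) + (1-p)^2*t = (1-p)^2*t := by ring
    have h2 : p^2*(t-0) + (1-p)^2*0 = p^2*t := by ring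
    rw [h1, h2, Real.sqrt_mul (sq_nonneg (1-p)) t, Real.sqrt_mul (sq_nonneg p) t,
      Real.sqrt_sq hq.le, Real.sqrt_sq hp.le]
    have hst : Real.sqrt t ≠ 0 := (Real.sqrt_pos.mpr ht).ne'
    field_simp
    ring

lemma betaReal : ∫ x in (0:ℝ)..1, x ^ (-(1/2):ℝ) * (1-x) ^ (-(1/2):ℝ) = π := by
  have hB := Complex.Gamma_mul_Gamma_eq_betaIntegral (s := 1/2) (t := 1/2)
    (by norm_num) (by norm_num)
  rw [show (1/2 + 1/2 : ℂ) = 1 by norm_num, Complex.Gamma_one, one_mul,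
    Complex.Gamma_one_half_eq] at hB
  have hpi : ((π:ℂ) ^ (1/2 : ℂ)) * ((π:ℂ) ^ (1/2 : ℂ)) = (π:ℂ) := by
    rw [← Complex.cpow_add _ _ (Complex.ofReal_ne_zero.mpr Real.pi_ne_zero)]
    norm_num
  rw [hpi, Complex.betaIntegral] at hB
  have hcongr : ∫ x in (0:ℝ)..1, ((x:ℂ)) ^ ((1/2:ℂ) - 1) * (1 - (x:ℂ)) ^ ((1/2:ℂ) - 1)
      = ((∫ x in (0:ℝ)..1, x ^ (-(1/2):ℝ) * (1-x) ^ (-(1/2):ℝ) : ℝ) : ℂ) := by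
    rw [← intervalIntegral.integral_ofReal]
    apply intervalIntegral.integral_congr
    intro x hx
    rw [Set.uIcc_of_le (by norm_num : (0:ℝ) ≤ 1)] at hx
    have h1 : (0:ℝ) ≤ x := hx.1
    have h2 : (0:ℝ) ≤ 1 - x := by linarith [hx.2]
    push_cast
    rw [Complex.ofReal_cpow h1, Complex.ofReal_cpow h2]
    push_cast
    norm_num
  rw [hcongr] at hB
  exact_mod_cast hB.symm

lemma tlemma {T : ℝ} (hT : 0 < T) :
    ∫ t in (0:ℝ)..T, (π * Real.sqrt (t*(T-t)))⁻¹ = 1 := by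
  have hsub := intervalIntegral.integral_comp_mul_left (a := (0:ℝ)) (b := 1)
    (f := fun u => (π * Real.sqrt (u*(T-u)))⁻¹) (c := T) hT.ne'
  rw [mul_zero, mul_one, smul_eq_mul] at hsub
  have hcongr : ∫ x in (0:ℝ)..1, (π * Real.sqrt ((T*x)*(T-T*x)))⁻¹
      = ∫ x in (0:ℝ)..1, (T⁻¹ * π⁻¹) * (x ^ (-(1/2):ℝ) * (1-x) ^ (-(1/2):ℝ)) := by
    apply intervalIntegral.integral_congr
    intro x hx
    rw [Set.uIcc_of_le (by norm_num : (0:ℝ) ≤ 1)] at hx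
    have h1 : (0:ℝ) ≤ x := hx.1
    have h2 : (0:ℝ) ≤ 1 - x := by linarith [hx.2]
    dsimp only
    rw [show T*x*(T-T*x) = T^2*(x*(1-x)) by ring, Real.sqrt_mul (sq_nonneg T),
      Real.sqrt_sq hT.le, Real.sqrt_mul h1,
      Real.rpow_neg h1, Real.rpow_neg h2, ← Real.sqrt_eq_rpow, ← Real.sqrt_eq_rpow]
    simp only [mul_inv]
    ring
  rw [hcongr, intervalIntegral.integral_const_mul, betaReal] at hsub
  have h1 : T⁻¹ * (π⁻¹ * π) = T⁻¹ * ∫ x in (0:ℝ)..T, (fun u => (π * Real.sqrt (u*(T-u)))⁻¹) x := by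
    rw [← hsub]; ring
  have h2 := mul_left_cancel₀ (inv_ne_zero hT.ne') h1
  rw [inv_mul_cancel₀ Real.pi_ne_zero] at h2
  exact h2.symm

/-- `ψ_{p,T}` is a probability density. -/
theorem psi_is_probability_density (p : ℝ) (hp : p ∈ Set.Ioo (0:ℝ) 1) (T : ℝ) (hT : 0 < T) :
    (∫ t in (0:ℝ)..T, ∫ v in (0:ℝ)..t, ∫ l in Set.Ioi (0:ℝ), ∫ x : ℝ,
        psiDensity p T t v x l) = 1 := by
  obtain ⟨hp0, hp1⟩ := hp
  have hq : 0 < 1 - p := by linarith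
  have key : Set.EqOn
      (fun t => ∫ v in (0:ℝ)..t, ∫ l in Set.Ioi (0:ℝ), ∫ x : ℝ, psiDensity p T t v x l)
      (fun t => (π * Real.sqrt (t*(T-t)))⁻¹) (Set.uIcc 0 T) := by
    intro t ht
    rw [Set.uIcc_of_le hT.le] at ht
    dsimp only
    rcases eq_or_lt_of_le ht.2 with htT | htT
    · subst htT
      have hz : ∀ v l : ℝ, (∫ x : ℝ, psiDensity p t t v x l) = 0 := by
        intro v l
        have h0 : (fun x : ℝ => psiDensity p t t v x l) = fun _ => 0 := by
          funext x; simp [psiDensity, fptDensity]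
        rw [h0, integral_zero]
      simp [hz]
    · rcases eq_or_lt_of_le ht.1 with ht0 | ht0
      · subst ht0
        simp
      · have hTt : 0 < T - t := by linarith
        have h1 : Real.sqrt (2*π*(T-t)) ≠ 0 := by positivity
        have h2 : Real.sqrt (2*π) ≠ 0 := by positivity
        have hne : ∀ᵐ v : ℝ, v ≠ t := by
          rw [MeasureTheory.ae_iff]
          simp only [ne_eq, not_not, Set.setOf_eq_eq_singleton]
          exact measure_singleton (μ := volume) t
        have hae : ∀ᵐ v : ℝ, v ∈ Set.uIoc (0:ℝ) t →
            (∫ l in Set.Ioi (0:ℝ), ∫ x : ℝ, psiDensity p T t v x l)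
              = (p*(1-p) / (Real.sqrt (2*π*(T-t)) * Real.sqrt (2*π)))
                  * ((p^2*(t-v) + (1-p)^2*v) * Real.sqrt (p^2*(t-v) + (1-p)^2*v))⁻¹ := by
          filter_upwards [hne] with v hvt hv
          rw [Set.uIoc_of_le ht0.le] at hv
          have hv0 : 0 < v := hv.1
          have hvt' : 0 < t - v := sub_pos.mpr (lt_of_le_of_ne hv.2 hvt)
          have hx : ∀ l : ℝ, (∫ x : ℝ, psiDensity p T t v x l)
              = (2 * (Real.sqrt (2*π*(T-t)))⁻¹)
                  * (fptDensity v (l*p) * fptDensity (t-v) (l*(1-p))) := by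
            intro l
            have h0 : (fun x : ℝ => psiDensity p T t v x l)
                = fun x => (2 * fptDensity v (l*p) * fptDensity (t-v) (l*(1-p)))
                    * (aFun p x * fptDensity (T-t) x) := by
              funext x; simp only [psiDensity]; ring
            rw [h0, integral_const_mul, xlemma hTt p]
            ring
          simp only [hx]
          rw [integral_const_mul, llemma hp0 hp1 hv0 hvt']
          field_simp
        rw [intervalIntegral.integral_congr_ae hae, intervalIntegral.integral_const_mul,
          vlemma hp0 hp1 ht0]
        apply sqa (by positivity) (by positivity)
        simp only [mul_pow, inv_pow, div_pow]
        rw [Real.sq_sqrt (show (0:ℝ) ≤ 2*π*(T-t) by positivity),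
          Real.sq_sqrt (show (0:ℝ) ≤ 2*π by positivity),
          Real.sq_sqrt ht0.le,
          Real.sq_sqrt (show (0:ℝ) ≤ t*(T-t) by positivity)]
        have hπ := Real.pi_pos
        field_simp
  rw [intervalIntegral.integral_congr key]
  exact tlemma hT
end

section
/- For every p ∈ (0,1) with q = 1−p, every T > 0 and every x ≠ 0, one has ∫₀^∞ ∫₀^T ∫₀^t h(v, lp)·h(t−v, lq)·h(T−t, x) dv dt dl = (1/√(2π T))·exp(−x²/(2T)); consequently, integrating the density ψ_{p,T}(t, v, x, l) = 2a(x)·h(v, lp)·h(t−v, lq)·h(T−t, x) over t, v and l yields the marginal 2a(x)·(1/√(2π T))·e^{−x²/(2T)}, which is the transition density of skew Brownian motion with parameter p. -/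
open Real MeasureTheory Set
open scoped ENNReal

/-! ### Basic properties of `fptDensity` -/

lemma fpt_nonneg (s y : ℝ) : 0 ≤ fptDensity s y := by
  unfold fptDensity; split
  · positivity
  · exact le_rfl

lemma fpt_of_nonpos {s : ℝ} (h : s ≤ 0) (y : ℝ) : fptDensity s y = 0 :=
  if_neg (not_lt.2 h)

lemma fpt_def {s : ℝ} (h : 0 < s) (y : ℝ) :
    fptDensity s y = |y| / Real.sqrt (2 * Real.pi * s ^ 3) * Real.exp (-(y ^ 2) / (2 * s)) :=
  if_pos h

lemma fpt_measurable : Measurable (fun p : ℝ × ℝ => fptDensity p.1 p.2) := by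
  unfold fptDensity
  refine Measurable.ite (measurableSet_lt measurable_const measurable_fst) ?_ measurable_const
  fun_prop

lemma exp_neg_mul_sq_le {u : ℝ} (hu : 0 < u) : Real.exp (-u) * u ^ 2 ≤ 4 := by
  have h1 : u / 2 + 1 ≤ Real.exp (u / 2) := Real.add_one_le_exp _
  have h2 : u ^ 2 / 4 ≤ Real.exp u := by
    have hp := Real.exp_pos (u / 2)
    calc u ^ 2 / 4 ≤ (u / 2 + 1) ^ 2 := by nlinarith
    _ ≤ Real.exp (u / 2) * Real.exp (u / 2) := by nlinarith
    _ = Real.exp u := by rw [← Real.exp_add]; ring_nf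
  have he : Real.exp (-u) * Real.exp u = 1 := by rw [← Real.exp_add]; simp
  nlinarith [Real.exp_pos (-u)]

lemma fpt_le {s : ℝ} (y : ℝ) (hy : y ≠ 0) :
    fptDensity s y ≤ 16 * Real.sqrt s / (Real.sqrt (2 * Real.pi) * |y| ^ 3) := by
  rcases le_or_gt s 0 with hs | hs
  · rw [fpt_of_nonpos hs]; positivity
  rw [fpt_def hs]
  have hss : Real.sqrt s * Real.sqrt s = s := Real.mul_self_sqrt hs.le
  have hs3 : Real.sqrt (2 * Real.pi * s ^ 3) = Real.sqrt (2 * Real.pi) * (s * Real.sqrt s) := by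
    rw [show 2 * Real.pi * s ^ 3 = (2 * Real.pi) * (s ^ 2 * s) by ring,
      Real.sqrt_mul (by positivity), Real.sqrt_mul (sq_nonneg s), Real.sqrt_sq hs.le]
  set u := y ^ 2 / (2 * s) with hu
  have hupos : 0 < u := by positivity
  have he := exp_neg_mul_sq_le hupos
  have hneg : -(y ^ 2) / (2 * s) = -u := by rw [hu]; ring
  have he2 : Real.exp (-u) * y ^ 4 ≤ 16 * s ^ 2 := by
    have h3 : Real.exp (-u) * y ^ 4 = (Real.exp (-u) * u ^ 2) * (4 * s ^ 2) := by
      rw [hu]; field_simp; ring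
    rw [h3]; nlinarith
  rw [hs3, hneg]
  set e := Real.exp (-u)
  have hepos : 0 < e := Real.exp_pos _
  have h2π : 0 < Real.sqrt (2 * Real.pi) := Real.sqrt_pos.2 (by positivity)
  have hsq : 0 < Real.sqrt s := Real.sqrt_pos.2 hs
  have habs : 0 < |y| := abs_pos.2 hy
  have h4 : |y| * |y| ^ 3 = y ^ 4 := by
    rw [show |y| * |y| ^ 3 = (|y| ^ 2) ^ 2 by ring, sq_abs]; ring
  rw [div_mul_eq_mul_div, div_le_div_iff₀ (by positivity) (by positivity)]
  calc |y| * e * (Real.sqrt (2 * Real.pi) * |y| ^ 3)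
      = Real.sqrt (2 * Real.pi) * (e * (|y| * |y| ^ 3)) := by ring
    _ = Real.sqrt (2 * Real.pi) * (e * y ^ 4) := by rw [h4]
    _ ≤ Real.sqrt (2 * Real.pi) * (16 * s ^ 2) := by
        exact mul_le_mul_of_nonneg_left he2 h2π.le
    _ = 16 * Real.sqrt s * (Real.sqrt (2 * Real.pi) * (s * Real.sqrt s)) := by
        have hrr : (16:ℝ) * Real.sqrt s * (Real.sqrt (2*Real.pi) * (s * Real.sqrt s))
            = Real.sqrt (2*Real.pi) * (16 * (s * (Real.sqrt s * Real.sqrt s))) := by ring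
        rw [hrr, hss]; ring

lemma fpt_le' {s S y : ℝ} (hy : y ≠ 0) (hS : s ≤ S) :
    fptDensity s y ≤ 16 * Real.sqrt S / (Real.sqrt (2 * Real.pi) * |y| ^ 3) := by
  refine (fpt_le y hy).trans ?_
  have h2π : 0 < Real.sqrt (2 * Real.pi) := Real.sqrt_pos.2 (by positivity)
  have habs : 0 < |y| := abs_pos.2 hy
  gcongr

/-! ### The `l` integral -/

lemma rpow_neg_three_halves {X : ℝ} (hX : 0 < X) :
    X ^ (-(3:ℝ)/2) = 1 / (X * Real.sqrt X) := by
  rw [show (-(3:ℝ)/2) = -(1 + 1/2) by norm_num, Real.rpow_neg hX.le,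
    Real.rpow_add hX, Real.rpow_one, ← Real.sqrt_eq_rpow]
  rw [one_div]

lemma integral_sq_exp {β : ℝ} (hβ : 0 < β) :
    ∫ l in Ioi (0:ℝ), l ^ 2 * Real.exp (-(β * l ^ 2))
      = Real.sqrt π / 4 * (1 / (β * Real.sqrt β)) := by
  have h := integral_rpow_mul_exp_neg_mul_rpow (p := 2) (q := 2) (b := β)
    (by norm_num) (by norm_num) hβ
  have hcongr : ∫ x in Ioi (0:ℝ), x ^ (2:ℝ) * Real.exp (-β * x ^ (2:ℝ))
      = ∫ l in Ioi (0:ℝ), l ^ 2 * Real.exp (-(β * l ^ 2)) := by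
    refine setIntegral_congr_fun measurableSet_Ioi (fun z hz => ?_)
    have h2 : z ^ (2:ℝ) = z ^ (2:ℕ) := by
      rw [show ((2:ℝ)) = ((2:ℕ):ℝ) by norm_num, Real.rpow_natCast]
    rw [h2]; ring_nf
  rw [hcongr] at h
  rw [h]
  have hG : Real.Gamma ((2+1)/2) = Real.sqrt π / 2 := by
    rw [show ((2:ℝ)+1)/2 = 1/2 + 1 by norm_num, Real.Gamma_add_one (by norm_num),
      Real.Gamma_one_half_eq]
    ring
  rw [hG, show (-((2:ℝ)+1)/2) = (-(3:ℝ)/2) by norm_num, rpow_neg_three_halves hβ]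
  ring

lemma l_pointwise {a b v w : ℝ} (hv : 0 < v) (hw : 0 < w) {l : ℝ} (hl : 0 < l)
    (ha : 0 < a) (hb : 0 < b) :
    fptDensity v (l * a) * fptDensity w (l * b)
      = a * b / (Real.sqrt (2*Real.pi*v^3) * Real.sqrt (2*Real.pi*w^3))
          * (l ^ 2 * Real.exp (-((a^2*w + b^2*v) / (2*v*w) * l ^ 2))) := by
  rw [fpt_def hv, fpt_def hw, abs_of_nonneg (by positivity : (0:ℝ) ≤ l*a),
    abs_of_nonneg (by positivity : (0:ℝ) ≤ l*b)]
  rw [show l*a / Real.sqrt (2*Real.pi*v^3) * Real.exp (-(l*a)^2/(2*v))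
      * (l*b / Real.sqrt (2*Real.pi*w^3) * Real.exp (-(l*b)^2/(2*w)))
    = a * b / (Real.sqrt (2*Real.pi*v^3) * Real.sqrt (2*Real.pi*w^3)) * l^2
      * (Real.exp (-(l*a)^2/(2*v)) * Real.exp (-(l*b)^2/(2*w))) by ring,
    ← Real.exp_add]
  rw [show -(l*a)^2/(2*v) + -(l*b)^2/(2*w) = -((a^2*w + b^2*v) / (2*v*w) * l^2) by
    field_simp; ring]
  ring

lemma intble_l {a b v w : ℝ} (ha : 0 < a) (hb : 0 < b) (hv : 0 < v) (hw : 0 < w) :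
    IntegrableOn (fun l => fptDensity v (l * a) * fptDensity w (l * b)) (Ioi (0:ℝ)) := by
  have hβ : (0:ℝ) < (a^2*w + b^2*v) / (2*v*w) := by positivity
  have h := (integrableOn_rpow_mul_exp_neg_mul_sq hβ (by norm_num : (-1:ℝ) < 2)).const_mul
    (a * b / (Real.sqrt (2*Real.pi*v^3) * Real.sqrt (2*Real.pi*w^3)))
  have h' : IntegrableOn (fun l => a * b / (Real.sqrt (2*Real.pi*v^3) * Real.sqrt (2*Real.pi*w^3))
      * (l ^ (2:ℝ) * Real.exp (-((a^2*w + b^2*v) / (2*v*w)) * l ^ 2))) (Ioi (0:ℝ)) := h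
  refine h'.congr_fun (fun l hl => ?_) measurableSet_Ioi
  have hl : (0:ℝ) < l := hl
  beta_reduce
  rw [show l ^ (2:ℝ) = l ^ (2:ℕ) by
      rw [show ((2:ℝ)) = ((2:ℕ):ℝ) by norm_num, Real.rpow_natCast]]
  rw [l_pointwise hv hw hl ha hb]
  ring_nf

lemma integral_l {a b v w : ℝ} (ha : 0 < a) (hb : 0 < b) (hv : 0 < v) (hw : 0 < w) :
    ∫ l in Ioi (0:ℝ), fptDensity v (l * a) * fptDensity w (l * b)
      = a * b / (2 * Real.sqrt (2 * Real.pi))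
          * (1 / ((a^2*w + b^2*v) * Real.sqrt (a^2*w + b^2*v))) := by
  set X := a^2*w + b^2*v with hX
  have hXpos : 0 < X := by positivity
  set β := X / (2*v*w) with hβ
  have hβpos : 0 < β := by positivity
  set C := a * b / (Real.sqrt (2*Real.pi*v^3) * Real.sqrt (2*Real.pi*w^3)) with hC
  have step1 : ∫ l in Ioi (0:ℝ), fptDensity v (l * a) * fptDensity w (l * b)
      = ∫ l in Ioi (0:ℝ), C * (l^2 * Real.exp (-(β * l^2))) := by
    refine setIntegral_congr_fun measurableSet_Ioi (fun l hl => ?_)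
    exact l_pointwise hv hw hl ha hb
  rw [step1, MeasureTheory.integral_const_mul, integral_sq_exp hβpos]
  refine (pow_left_inj₀ ?_ ?_ (two_ne_zero)).1 ?_
  · have h1 : 0 < Real.sqrt (2*Real.pi*v^3) := Real.sqrt_pos.2 (by positivity)
    have h2 : 0 < Real.sqrt (2*Real.pi*w^3) := Real.sqrt_pos.2 (by positivity)
    have h3 : 0 < Real.sqrt β := Real.sqrt_pos.2 hβpos
    have h4 : 0 ≤ Real.sqrt π := Real.sqrt_nonneg _
    rw [hC]; positivity
  · have h5 : 0 < Real.sqrt (2*Real.pi) := Real.sqrt_pos.2 (by positivity)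
    have h6 : 0 < Real.sqrt X := Real.sqrt_pos.2 hXpos
    positivity
  · rw [hC]
    have e1 : Real.sqrt (2*Real.pi*v^3) ^ 2 = 2*Real.pi*v^3 := Real.sq_sqrt (by positivity)
    have e2 : Real.sqrt (2*Real.pi*w^3) ^ 2 = 2*Real.pi*w^3 := Real.sq_sqrt (by positivity)
    have e3 : Real.sqrt β ^ 2 = β := Real.sq_sqrt hβpos.le
    have e4 : Real.sqrt π ^ 2 = π := Real.sq_sqrt Real.pi_pos.le
    have e5 : Real.sqrt (2*Real.pi) ^ 2 = 2*Real.pi := Real.sq_sqrt (by positivity)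
    have e6 : Real.sqrt X ^ 2 = X := Real.sq_sqrt hXpos.le
    have h1 : Real.sqrt (2*Real.pi*v^3) ≠ 0 := by positivity
    have h2 : Real.sqrt (2*Real.pi*w^3) ≠ 0 := by positivity
    have h3 : Real.sqrt β ≠ 0 := by positivity
    have h5 : Real.sqrt (2*Real.pi) ≠ 0 := by positivity
    have h6 : Real.sqrt X ≠ 0 := by positivity
    have hπ : Real.pi ≠ 0 := Real.pi_ne_zero
    field_simp
    rw [hβ]
    field_simp
    have s2 : Real.sqrt 2 ^ 4 = 4 := by
      rw [show (4:ℕ)=2*2 from rfl, pow_mul, Real.sq_sqrt (by norm_num : (0:ℝ) ≤ 2)]; norm_num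
    have sπ : Real.sqrt π ^ 4 = π ^ 2 := by
      rw [show (4:ℕ)=2*2 from rfl, pow_mul, e4]
    have sv : Real.sqrt v ^ 2 = v := Real.sq_sqrt hv.le
    have sw : Real.sqrt w ^ 2 = w := Real.sq_sqrt hw.le
    have sv3 : Real.sqrt (v^3) ^ 2 = v^3 := Real.sq_sqrt (by positivity)
    have sw3 : Real.sqrt (w^3) ^ 2 = w^3 := Real.sq_sqrt (by positivity)
    ring_nf
    simp only [s2, sπ, sv, sw, sv3, sw3, e6]
    rw [Real.sq_sqrt (by positivity : (0:ℝ) ≤ π*v^3*2), Real.sq_sqrt (by positivity : (0:ℝ) ≤ π*w^3*2),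
      Real.sq_sqrt (by positivity : (0:ℝ) ≤ π*2), e4,
      Real.sq_sqrt (mul_pos (mul_pos (mul_pos hXpos (inv_pos.2 hv)) (inv_pos.2 hw)) (by norm_num)).le]
    field_simp

/-! ### The `v` integral -/

lemma A_pos {a b t : ℝ} (ha : 0 < a) (hb : 0 < b) (ht : 0 < t) {x : ℝ}
    (hx : x ∈ Icc (0:ℝ) t) : 0 < a^2*(t-x) + b^2*x := by
  rcases eq_or_lt_of_le hx.1 with h | h
  · rw [← h]; simpa using by positivity
  · have h1 : (0:ℝ) ≤ a^2*(t-x) := by nlinarith [hx.2]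
    have h2 : (0:ℝ) < b^2*x := by positivity
    linarith

lemma c1_contOn {a b t : ℝ} (ha : 0 < a) (hb : 0 < b) (ht : 0 < t) :
    ContinuousOn (fun v => a*b/(2*Real.sqrt (2*Real.pi))
      * (1/((a^2*(t-v)+b^2*v) * Real.sqrt (a^2*(t-v)+b^2*v)))) (Icc (0:ℝ) t) := by
  refine ContinuousOn.mul continuousOn_const ?_
  refine ContinuousOn.div continuousOn_const ?_ ?_
  · exact ((continuousOn_const.mul (continuousOn_const.sub (continuousOn_id))).add
      (continuousOn_const.mul continuousOn_id)).mul
      (((continuousOn_const.mul (continuousOn_const.sub (continuousOn_id))).add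
      (continuousOn_const.mul continuousOn_id)).sqrt)
  · intro x hx
    have h := A_pos ha hb ht hx
    have : 0 < Real.sqrt (a^2*(t-x)+b^2*x) := Real.sqrt_pos.2 h
    positivity

lemma c1_intble {a b t : ℝ} (ha : 0 < a) (hb : 0 < b) (ht : 0 < t) :
    IntegrableOn (fun v => a*b/(2*Real.sqrt (2*Real.pi))
      * (1/((a^2*(t-v)+b^2*v) * Real.sqrt (a^2*(t-v)+b^2*v)))) (Ioc (0:ℝ) t) :=
  ((c1_contOn ha hb ht).integrableOn_compact isCompact_Icc).mono_set Ioc_subset_Icc_self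

lemma integral_v {a b t : ℝ} (ha : 0 < a) (hb : 0 < b) (hab : a + b = 1) (ht : 0 < t) :
    ∫ v in Ioc (0:ℝ) t, a*b/(2*Real.sqrt (2*Real.pi))
        * (1/((a^2*(t-v)+b^2*v) * Real.sqrt (a^2*(t-v)+b^2*v)))
      = 1 / Real.sqrt (2*Real.pi*t) := by
  have h2π : 0 < Real.sqrt (2*Real.pi) := Real.sqrt_pos.2 (by positivity)
  have hsqt : 0 < Real.sqrt t := Real.sqrt_pos.2 ht
  have hmst : Real.sqrt t * Real.sqrt t = t := Real.mul_self_sqrt ht.le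
  have hsplit : Real.sqrt (2*Real.pi*t) = Real.sqrt (2*Real.pi) * Real.sqrt t :=
    Real.sqrt_mul (by positivity) t
  rcases eq_or_ne b a with hba | hba
  · rw [hba] at hab ⊢
    have ha2 : a = 1/2 := by linarith
    have hst : Real.sqrt (a^2*t) = a * Real.sqrt t := by
      rw [Real.sqrt_mul (by positivity), Real.sqrt_sq ha.le]
    have hconst : (fun v => a*a/(2*Real.sqrt (2*Real.pi))
        * (1/((a^2*(t-v)+a^2*v) * Real.sqrt (a^2*(t-v)+a^2*v))))
        = fun _ => 1/(2*a*Real.sqrt (2*Real.pi)*(t*Real.sqrt t)) := by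
      funext v
      rw [show a^2*(t-v)+a^2*v = a^2*t by ring, hst]
      have : a^2*t = a*(a*t) := by ring
      field_simp
    rw [hconst, setIntegral_const, Real.volume_real_Ioc_of_le ht.le, sub_zero,
      smul_eq_mul, hsplit, ha2]
    field_simp
  · set c := a*b/(2*Real.sqrt (2*Real.pi)) * (-2/(b^2-a^2)) with hc
    have hba3 : b - a ≠ 0 := sub_ne_zero.2 hba
    have hba2 : b^2 - a^2 ≠ 0 := by
      intro h; apply hba3; nlinarith
    have key : ∀ x ∈ Set.uIcc (0:ℝ) t,
        HasDerivAt (fun v => c * (Real.sqrt (a^2*(t-v)+b^2*v))⁻¹)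
          (a*b/(2*Real.sqrt (2*Real.pi))
            * (1/((a^2*(t-x)+b^2*x) * Real.sqrt (a^2*(t-x)+b^2*x)))) x := by
      intro x hx
      rw [Set.uIcc_of_le ht.le] at hx
      have hA := A_pos ha hb ht hx
      have hsA : 0 < Real.sqrt (a^2*(t-x)+b^2*x) := Real.sqrt_pos.2 hA
      have h1 : HasDerivAt (fun v => a^2*(t-v)+b^2*v) (b^2-a^2) x := by
        have hh := (((hasDerivAt_const x t).sub (hasDerivAt_id x)).const_mul (a^2)).add
          ((hasDerivAt_id x).const_mul (b^2))
        exact hh.congr_deriv (by ring)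
      have h2 : HasDerivAt (fun v => Real.sqrt (a^2*(t-v)+b^2*v))
          ((b^2-a^2) / (2 * Real.sqrt (a^2*(t-x)+b^2*x))) x := by
        have h3 := (Real.hasDerivAt_sqrt hA.ne').comp x h1
        exact h3.congr_deriv (by ring)
      have h5 := (h2.inv hsA.ne').const_mul c
      refine h5.congr_deriv ?_
      rw [hc, show Real.sqrt (a^2*(t-x)+b^2*x) ^ 2 = a^2*(t-x)+b^2*x from Real.sq_sqrt hA.le]
      field_simp
    have hint : IntervalIntegrable (fun v => a*b/(2*Real.sqrt (2*Real.pi))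
        * (1/((a^2*(t-v)+b^2*v) * Real.sqrt (a^2*(t-v)+b^2*v)))) volume 0 t := by
      apply ContinuousOn.intervalIntegrable
      rw [Set.uIcc_of_le ht.le]
      exact c1_contOn ha hb ht
    have hftc := intervalIntegral.integral_eq_sub_of_hasDerivAt key hint
    rw [← intervalIntegral.integral_of_le ht.le, hftc]
    rw [show a^2*(t-t)+b^2*t = b^2*t by ring, show a^2*(t-0)+b^2*0 = a^2*t by ring,
      Real.sqrt_mul (by positivity : (0:ℝ) ≤ b^2), Real.sqrt_sq hb.le,
      Real.sqrt_mul (by positivity : (0:ℝ) ≤ a^2), Real.sqrt_sq ha.le, hsplit, hc]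
    rw [show b^2 - a^2 = (b - a) * (a + b) by ring, hab, mul_one]
    field_simp
    ring

/-! ### The `t` integral -/

section L3
variable {T x : ℝ}

lemma psi_hasDeriv (hT : 0 < T) (hx : x ≠ 0) (y : ℝ) :
    HasDerivAt (fun y => T^2*y^2/(T*y^2+x^2))
      (2*T^2*x^2*y/(T*y^2+x^2)^2) y := by
  have hden : (0:ℝ) < T*y^2+x^2 := by positivity
  have hnum : HasDerivAt (fun y : ℝ => T^2*y^2) (T^2*(2*y)) y := by
    simpa [mul_comm] using ((hasDerivAt_pow 2 y).const_mul (T^2))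
  have hden' : HasDerivAt (fun y : ℝ => T*y^2+x^2) (T*(2*y)) y := by
    simpa [mul_comm] using (((hasDerivAt_pow 2 y).const_mul T).add_const (x^2))
  have h := hnum.div hden' hden.ne'
  exact h.congr_deriv (by ring)

lemma psi_inj (hT : 0 < T) (hx : x ≠ 0) :
    InjOn (fun y => T^2*y^2/(T*y^2+x^2)) (Ioi (0:ℝ)) := by
  intro y1 h1 y2 h2 h
  have hd1 : (0:ℝ) < T*y1^2+x^2 := by positivity
  have hd2 : (0:ℝ) < T*y2^2+x^2 := by positivity
  have h1' : (0:ℝ) < y1 := h1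
  have h2' : (0:ℝ) < y2 := h2
  simp only at h
  rw [div_eq_div_iff hd1.ne' hd2.ne'] at h
  have hx2 : (0:ℝ) < x^2 := by positivity
  have hsq : y1^2 = y2^2 := by
    have hTx : ((T:ℝ)^2*x^2) ≠ 0 := by positivity
    apply mul_left_cancel₀ hTx
    linear_combination h
  exact (pow_left_inj₀ h1'.le h2'.le two_ne_zero).1 hsq

lemma psi_image (hT : 0 < T) (hx : x ≠ 0) :
    (fun y => T^2*y^2/(T*y^2+x^2)) '' (Ioi (0:ℝ)) = Ioo 0 T := by
  ext u
  constructor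
  · rintro ⟨y, hy, rfl⟩
    have hy' : (0:ℝ) < y := hy
    have hden : (0:ℝ) < T*y^2+x^2 := by positivity
    constructor
    · positivity
    · rw [div_lt_iff₀ hden]
      nlinarith [sq_nonneg x, mul_pos hT (by positivity : (0:ℝ) < x^2)]
  · rintro ⟨hu0, huT⟩
    have hTu : 0 < T - u := by linarith
    have harg : (0:ℝ) < x^2*u/(T*(T-u)) := by positivity
    refine ⟨Real.sqrt (x^2*u/(T*(T-u))), Real.sqrt_pos.2 harg, ?_⟩
    have hsq : Real.sqrt (x^2*u/(T*(T-u))) ^ 2 = x^2*u/(T*(T-u)) := Real.sq_sqrt harg.le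
    simp only
    rw [hsq]
    field_simp
    ring

lemma psi_pointwise (hT : 0 < T) (hx : x ≠ 0) {y : ℝ} (hy : 0 < y) :
    |2*T^2*x^2*y/(T*y^2+x^2)^2|
        * ((1 / Real.sqrt (2*Real.pi*(T^2*y^2/(T*y^2+x^2))))
          * fptDensity (T - T^2*y^2/(T*y^2+x^2)) x)
      = Real.exp (-(x^2)/(2*T)) / (π*Real.sqrt T) * Real.exp (-(1/2)*y^2) := by
  have hD : (0:ℝ) < T*y^2+x^2 := by positivity
  have hTm : T - T^2*y^2/(T*y^2+x^2) = x^2*T/(T*y^2+x^2) := by field_simp; ring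
  have hTmpos : (0:ℝ) < x^2*T/(T*y^2+x^2) := by positivity
  rw [hTm, fpt_def hTmpos, abs_of_pos (by positivity : (0:ℝ) < 2*T^2*x^2*y/(T*y^2+x^2)^2)]
  have hexp : -(x^2)/(2*(x^2*T/(T*y^2+x^2))) = -(x^2)/(2*T) + -(1/2)*y^2 := by
    field_simp; ring
  rw [hexp, Real.exp_add]
  have hcoeff : 2*T^2*x^2*y/(T*y^2+x^2)^2
      * (1 / Real.sqrt (2*Real.pi*(T^2*y^2/(T*y^2+x^2))))
      * (|x| / Real.sqrt (2*Real.pi*(x^2*T/(T*y^2+x^2))^3))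
      = 1/(π*Real.sqrt T) := by
    have hs1 : (0:ℝ) < Real.sqrt (2*Real.pi*(T^2*y^2/(T*y^2+x^2))) :=
      Real.sqrt_pos.2 (by positivity)
    have hs2 : (0:ℝ) < Real.sqrt (2*Real.pi*(x^2*T/(T*y^2+x^2))^3) :=
      Real.sqrt_pos.2 (by positivity)
    have hsT : (0:ℝ) < Real.sqrt T := Real.sqrt_pos.2 hT
    have habs : (0:ℝ) < |x| := abs_pos.2 hx
    refine (pow_left_inj₀ ?_ ?_ two_ne_zero).1 ?_
    · positivity
    · positivity
    · have e1 : Real.sqrt (2*Real.pi*(T^2*y^2/(T*y^2+x^2))) ^ 2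
          = 2*Real.pi*(T^2*y^2/(T*y^2+x^2)) := Real.sq_sqrt (by positivity)
      have e2 : Real.sqrt (2*Real.pi*(x^2*T/(T*y^2+x^2))^3) ^ 2
          = 2*Real.pi*(x^2*T/(T*y^2+x^2))^3 := Real.sq_sqrt (by positivity)
      have e3 : Real.sqrt T ^ 2 = T := Real.sq_sqrt hT.le
      have e4 : |x| ^ 2 = x ^ 2 := sq_abs x
      have hπ : Real.pi ≠ 0 := Real.pi_ne_zero
      rw [show (2*T^2*x^2*y/(T*y^2+x^2)^2
            * (1 / Real.sqrt (2*Real.pi*(T^2*y^2/(T*y^2+x^2))))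
            * (|x| / Real.sqrt (2*Real.pi*(x^2*T/(T*y^2+x^2))^3)))^2
          = (2*T^2*x^2*y/(T*y^2+x^2)^2)^2
            * (1 / Real.sqrt (2*Real.pi*(T^2*y^2/(T*y^2+x^2)))^2)
            * (|x|^2 / Real.sqrt (2*Real.pi*(x^2*T/(T*y^2+x^2))^3)^2) by ring,
        e1, e2, e4, show (1/(π*Real.sqrt T))^2 = 1/(π^2*Real.sqrt T^2) by ring, e3]
      field_simp
  calc 2*T^2*x^2*y/(T*y^2+x^2)^2
        * ((1 / Real.sqrt (2*Real.pi*(T^2*y^2/(T*y^2+x^2))))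
          * (|x| / Real.sqrt (2*Real.pi*(x^2*T/(T*y^2+x^2))^3)
            * (Real.exp (-(x^2)/(2*T)) * Real.exp (-(1/2)*y^2))))
      = (2*T^2*x^2*y/(T*y^2+x^2)^2
          * (1 / Real.sqrt (2*Real.pi*(T^2*y^2/(T*y^2+x^2))))
          * (|x| / Real.sqrt (2*Real.pi*(x^2*T/(T*y^2+x^2))^3)))
        * (Real.exp (-(x^2)/(2*T)) * Real.exp (-(1/2)*y^2)) := by ring
    _ = Real.exp (-(x^2)/(2*T)) / (π*Real.sqrt T) * Real.exp (-(1/2)*y^2) := by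
        rw [hcoeff]; ring

lemma integral_t (hT : 0 < T) (hx : x ≠ 0) :
    ∫ t in Ioo (0:ℝ) T, (1 / Real.sqrt (2*Real.pi*t)) * fptDensity (T-t) x
      = 1 / Real.sqrt (2*Real.pi*T) * Real.exp (-(x^2)/(2*T)) := by
  rw [← psi_image hT hx,
    integral_image_eq_integral_abs_deriv_smul measurableSet_Ioi
      (fun y _ => (psi_hasDeriv hT hx y).hasDerivWithinAt) (psi_inj hT hx)]
  rw [setIntegral_congr_fun measurableSet_Ioi
    (fun y hy => by
      simpa only [smul_eq_mul] using psi_pointwise hT hx (hy : (0:ℝ) < y))]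
  rw [MeasureTheory.integral_const_mul]
  have hg : ∫ y in Ioi (0:ℝ), Real.exp (-(1/2)*y^2) = Real.sqrt (2*Real.pi)/2 := by
    have := integral_gaussian_Ioi (1/2)
    rw [show Real.pi/(1/2) = 2*Real.pi by ring] at this
    simpa using this
  rw [hg]
  have h2π : Real.sqrt (2*Real.pi) * Real.sqrt (2*Real.pi) = 2*Real.pi :=
    Real.mul_self_sqrt (by positivity)
  have hsplit : Real.sqrt (2*Real.pi*T) = Real.sqrt (2*Real.pi) * Real.sqrt T :=
    Real.sqrt_mul (by positivity) T
  have hsT : (0:ℝ) < Real.sqrt T := Real.sqrt_pos.2 hT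
  have h2πs : (0:ℝ) < Real.sqrt (2*Real.pi) := Real.sqrt_pos.2 (by positivity)
  rw [hsplit]
  have hπ : Real.pi ≠ 0 := Real.pi_ne_zero
  have hco : (1:ℝ)/(π*Real.sqrt T) * (Real.sqrt (2*Real.pi)/2)
      = 1/(Real.sqrt (2*Real.pi)*Real.sqrt T) := by
    refine (pow_left_inj₀ (by positivity) (by positivity) two_ne_zero).1 ?_
    rw [show ((1:ℝ)/(π*Real.sqrt T) * (Real.sqrt (2*Real.pi)/2))^2
        = 1/(π^2*Real.sqrt T^2) * (Real.sqrt (2*Real.pi)^2/4) by ring,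
      show ((1:ℝ)/(Real.sqrt (2*Real.pi)*Real.sqrt T))^2
        = 1/(Real.sqrt (2*Real.pi)^2*Real.sqrt T^2) by ring,
      Real.sq_sqrt (by positivity : (0:ℝ) ≤ 2*Real.pi), Real.sq_sqrt hT.le]
    field_simp
    ring
  linear_combination (Real.exp (-(x^2)/(2*T))) * hco

lemma intble_t (hT : 0 < T) (hx : x ≠ 0) :
    IntegrableOn (fun t => (1 / Real.sqrt (2*Real.pi*t)) * fptDensity (T-t) x) (Ioo (0:ℝ) T) := by
  rw [← psi_image hT hx,
    integrableOn_image_iff_integrableOn_abs_deriv_smul measurableSet_Ioi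
      (fun y _ => (psi_hasDeriv hT hx y).hasDerivWithinAt) (psi_inj hT hx)]
  have hInt : IntegrableOn
      (fun y => Real.exp (-(x^2)/(2*T)) / (π*Real.sqrt T) * Real.exp (-(1/2)*y^2))
      (Ioi (0:ℝ)) := by
    have := (integrable_exp_neg_mul_sq (by norm_num : (0:ℝ) < 1/2)).const_mul
      (Real.exp (-(x^2)/(2*T)) / (π*Real.sqrt T))
    exact (this.integrableOn).congr_fun (fun y _ => by norm_num) measurableSet_Ioi
  refine hInt.congr_fun ?_ measurableSet_Ioi
  intro y hy
  simpa only [smul_eq_mul] using (psi_pointwise hT hx (hy : (0:ℝ) < y)).symm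

end L3

/-! ### Support lemma for lintegrals -/

lemma lintegral_support {f : ℝ → ℝ≥0∞} {s : Set ℝ} (hs : MeasurableSet s)
    (h : ∀ x, x ∉ s → f x = 0) : ∫⁻ x in s, f x = ∫⁻ x, f x := by
  rw [← lintegral_indicator hs]
  refine lintegral_congr fun x => ?_
  by_cases hx : x ∈ s
  · simp [Set.indicator_of_mem hx]
  · simp [Set.indicator_of_notMem hx, h x hx]

/-- Integrating out `t`, `v` and `l` in the joint density recovers the
transition density `2 a(x) (2πT)^{-1/2} e^{−x²/(2T)}` of skew Brownian motion. -/
theorem psi_marginal (p q : ℝ) (hp : p ∈ Set.Ioo (0:ℝ) 1) (hq : q = 1 - p)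
    (T x : ℝ) (hT : 0 < T) (hx : x ≠ 0) :
    (∫ l in Set.Ioi (0:ℝ), ∫ t in (0:ℝ)..T, ∫ v in (0:ℝ)..t,
        fptDensity v (l * p) * fptDensity (t - v) (l * q) * fptDensity (T - t) x)
      = 1 / Real.sqrt (2 * Real.pi * T) * Real.exp (-(x ^ 2) / (2 * T)) ∧
    (∫ l in Set.Ioi (0:ℝ), ∫ t in (0:ℝ)..T, ∫ v in (0:ℝ)..t,
        2 * aFun p x * fptDensity v (l * p) * fptDensity (t - v) (l * q)
          * fptDensity (T - t) x)
      = 2 * aFun p x * (1 / Real.sqrt (2 * Real.pi * T) * Real.exp (-(x ^ 2) / (2 * T))) := by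
  obtain ⟨hp0, hp1⟩ := hp
  have hq0 : 0 < q := by rw [hq]; linarith
  have hpq : p + q = 1 := by rw [hq]; ring
  set G : ℝ → ℝ → ℝ → ℝ :=
    fun l t v => fptDensity v (l * p) * fptDensity (t - v) (l * q) * fptDensity (T - t) x
    with hG
  have hGnn : ∀ l t v, 0 ≤ G l t v := fun l t v =>
    mul_nonneg (mul_nonneg (fpt_nonneg _ _) (fpt_nonneg _ _)) (fpt_nonneg _ _)
  -- measurability
  have measG : Measurable (fun z : ℝ × ℝ × ℝ => G z.1 z.2.1 z.2.2) := by
    apply Measurable.mul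
    apply Measurable.mul
    · exact fpt_measurable.comp (measurable_snd.snd.prodMk (measurable_fst.mul_const p))
    · exact fpt_measurable.comp
        ((measurable_snd.fst.sub measurable_snd.snd).prodMk (measurable_fst.mul_const q))
    · exact fpt_measurable.comp
        ((measurable_const.sub measurable_snd.fst).prodMk measurable_const)
  have measG_lt : ∀ l t, Measurable (fun v => ENNReal.ofReal (G l t v)) := fun l t =>
    ENNReal.measurable_ofReal.comp (measG.comp
      (measurable_const.prodMk (measurable_const.prodMk measurable_id)))
  have measG2 : Measurable (fun z : (ℝ × ℝ) × ℝ => ENNReal.ofReal (G z.1.1 z.1.2 z.2)) :=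
    ENNReal.measurable_ofReal.comp (measG.comp
      ((measurable_fst.fst).prodMk ((measurable_fst.snd).prodMk measurable_snd)))
  have measNv : Measurable (fun z : ℝ × ℝ => ∫⁻ v, ENNReal.ofReal (G z.1 z.2 v)) :=
    Measurable.lintegral_prod_right' measG2
  -- support facts
  have hGzero_v : ∀ l t v, v ∉ Ioc (0:ℝ) t → G l t v = 0 := by
    intro l t v hv
    rcases not_and_or.1 hv with h | h
    · rw [hG]; simp [fpt_of_nonpos (not_lt.1 h)]
    · have : t - v ≤ 0 := by linarith [not_le.1 h]
      rw [hG]; simp [fpt_of_nonpos this]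
  have hGzero_t : ∀ l t, t ∉ Ioc (0:ℝ) T → ∀ v, G l t v = 0 := by
    intro l t ht v
    rcases not_and_or.1 ht with h | h
    · have ht0 : t ≤ 0 := not_lt.1 h
      rcases le_or_gt v 0 with hv | hv
      · rw [hG]; simp [fpt_of_nonpos hv]
      · have : t - v ≤ 0 := by linarith
        rw [hG]; simp [fpt_of_nonpos this]
    · have : T - t ≤ 0 := by linarith [not_le.1 h]
      rw [hG]; simp [fpt_of_nonpos this]
  -- uniform bound
  set Cl : ℝ → ℝ := fun l =>
    (16 * Real.sqrt T / (Real.sqrt (2*Real.pi) * |l*p|^3))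
    * (16 * Real.sqrt T / (Real.sqrt (2*Real.pi) * |l*q|^3))
    * (16 * Real.sqrt T / (Real.sqrt (2*Real.pi) * |x|^3)) with hCl
  have hGle : ∀ l ∈ Ioi (0:ℝ), ∀ t ∈ Ioc (0:ℝ) T, ∀ v ∈ Ioc (0:ℝ) t, G l t v ≤ Cl l := by
    intro l hl t ht v hv
    have hl0 : (0:ℝ) < l := hl
    have hlp : l * p ≠ 0 := by positivity
    have hlq : l * q ≠ 0 := by positivity
    have h2π : (0:ℝ) < Real.sqrt (2*Real.pi) := Real.sqrt_pos.2 (by positivity)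
    have b1 := fpt_le' (s := v) (S := T) hlp (by linarith [ht.2, hv.2] : v ≤ T)
    have b2 := fpt_le' (s := t - v) (S := T) hlq (by linarith [ht.2, hv.1] : t - v ≤ T)
    have b3 := fpt_le' (s := T - t) (S := T) hx (by linarith [ht.1] : T - t ≤ T)
    have hB1 : (0:ℝ) ≤ 16 * Real.sqrt T / (Real.sqrt (2*Real.pi) * |l*p|^3) := by positivity
    have hB2 : (0:ℝ) ≤ 16 * Real.sqrt T / (Real.sqrt (2*Real.pi) * |l*q|^3) := by positivity
    rw [hCl, hG]
    exact mul_le_mul (mul_le_mul b1 b2 (fpt_nonneg _ _) hB1) b3 (fpt_nonneg _ _)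
      (mul_nonneg hB1 hB2)
  -- finiteness bounds
  have hNvle : ∀ l ∈ Ioi (0:ℝ), ∀ t ∈ Ioc (0:ℝ) T,
      (∫⁻ v, ENNReal.ofReal (G l t v)) ≤ ENNReal.ofReal (Cl l) * ENNReal.ofReal T := by
    intro l hl t ht
    rw [← lintegral_support measurableSet_Ioc
      (fun v hv => by simp [hGzero_v l t v hv])]
    calc ∫⁻ v in Ioc (0:ℝ) t, ENNReal.ofReal (G l t v)
        ≤ ∫⁻ _ in Ioc (0:ℝ) t, ENNReal.ofReal (Cl l) :=
          setLIntegral_mono' measurableSet_Ioc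
            (fun v hv => ENNReal.ofReal_le_ofReal (hGle l hl t ht v hv))
      _ = ENNReal.ofReal (Cl l) * volume (Ioc (0:ℝ) t) := setLIntegral_const _ _
      _ ≤ ENNReal.ofReal (Cl l) * ENNReal.ofReal T := by
          rw [Real.volume_Ioc, sub_zero]
          exact mul_le_mul_right (ENNReal.ofReal_le_ofReal ht.2) _
  have hNvfin : ∀ l ∈ Ioi (0:ℝ), ∀ t ∈ Ioc (0:ℝ) T,
      (∫⁻ v, ENNReal.ofReal (G l t v)) ≠ ⊤ := by
    intro l hl t ht
    refine ((hNvle l hl t ht).trans_lt ?_).ne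
    exact ENNReal.mul_lt_top ENNReal.ofReal_lt_top ENNReal.ofReal_lt_top
  have hNvzero : ∀ l t : ℝ, t ∉ Ioc (0:ℝ) T → (∫⁻ v, ENNReal.ofReal (G l t v)) = 0 := by
    intro l t ht
    simp [hGzero_t l t ht]
  have hMfin : ∀ l ∈ Ioi (0:ℝ), (∫⁻ t, ∫⁻ v, ENNReal.ofReal (G l t v)) ≠ ⊤ := by
    intro l hl
    rw [← lintegral_support measurableSet_Ioc (fun t ht => hNvzero l t ht)]
    have hb : ∫⁻ t in Ioc (0:ℝ) T, ∫⁻ v, ENNReal.ofReal (G l t v)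
        ≤ ∫⁻ _ in Ioc (0:ℝ) T, ENNReal.ofReal (Cl l) * ENNReal.ofReal T :=
      setLIntegral_mono' measurableSet_Ioc (fun t ht => hNvle l hl t ht)
    refine (hb.trans_lt ?_).ne
    rw [setLIntegral_const, Real.volume_Ioc, sub_zero]
    exact ENNReal.mul_lt_top
      (ENNReal.mul_lt_top ENNReal.ofReal_lt_top ENNReal.ofReal_lt_top) ENNReal.ofReal_lt_top
  -- Step A : innermost interval integral as a lintegral
  have stepA : ∀ l : ℝ, ∀ t ∈ Ioc (0:ℝ) T,
      (∫ v in (0:ℝ)..t, G l t v) = (∫⁻ v, ENNReal.ofReal (G l t v)).toReal := by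
    intro l t ht
    rw [intervalIntegral.integral_of_le ht.1.le,
      MeasureTheory.integral_eq_lintegral_of_nonneg_ae
        (Filter.Eventually.of_forall fun v => hGnn l t v)
        ((measG.comp (measurable_const.prodMk
          (measurable_const.prodMk measurable_id))).aestronglyMeasurable)]
    congr 1
    exact lintegral_support measurableSet_Ioc (fun v hv => by simp [hGzero_v l t v hv])
  -- Step B : middle interval integral as a lintegral
  have stepB : ∀ l ∈ Ioi (0:ℝ),
      (∫ t in (0:ℝ)..T, ∫ v in (0:ℝ)..t, G l t v)
        = (∫⁻ t, ∫⁻ v, ENNReal.ofReal (G l t v)).toReal := by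
    intro l hl
    have hm : AEStronglyMeasurable (fun t : ℝ => (∫⁻ v, ENNReal.ofReal (G l t v)).toReal)
        (volume.restrict (Ioc (0:ℝ) T)) :=
      ((measNv.comp (measurable_const.prodMk measurable_id)).ennreal_toReal).aestronglyMeasurable
    rw [intervalIntegral.integral_of_le hT.le,
      setIntegral_congr_fun measurableSet_Ioc (fun t ht => stepA l t ht),
      MeasureTheory.integral_eq_lintegral_of_nonneg_ae
        (Filter.Eventually.of_forall fun t => ENNReal.toReal_nonneg) hm]
    congr 1
    rw [setLIntegral_congr_fun measurableSet_Ioc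
      (fun t ht => by
        rw [ENNReal.ofReal_toReal (hNvfin l hl t ht)])]
    exact lintegral_support measurableSet_Ioc (fun t ht => hNvzero l t ht)
  -- innermost l-lintegral computation
  have hGzero_v' : ∀ l t v : ℝ, ¬(0 < v ∧ v < t) → G l t v = 0 := by
    intro l t v hc
    rcases not_and_or.1 hc with h | h
    · rw [hG]; simp [fpt_of_nonpos (not_lt.1 h)]
    · rw [hG]; simp [fpt_of_nonpos (by linarith [not_lt.1 h] : t - v ≤ 0)]
  have hK0 : ∀ t v : ℝ, ¬(0 < v ∧ v < t) →
      (∫⁻ l in Ioi (0:ℝ), ENNReal.ofReal (G l t v)) = 0 := by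
    intro t v hc
    have hz : ∀ l : ℝ, G l t v = 0 := fun l => hGzero_v' l t v hc
    simp [hz]
  have hK : ∀ t v : ℝ, 0 < v → v < t →
      (∫⁻ l in Ioi (0:ℝ), ENNReal.ofReal (G l t v))
        = ENNReal.ofReal ((p*q/(2*Real.sqrt (2*Real.pi))
            * (1/((p^2*(t-v)+q^2*v) * Real.sqrt (p^2*(t-v)+q^2*v)))) * fptDensity (T-t) x) := by
    intro t v hv hvt
    have hw : 0 < t - v := by linarith
    have hX : 0 < p^2*(t-v)+q^2*v :=
      add_pos (mul_pos (pow_pos hp0 2) hw) (mul_pos (pow_pos hq0 2) hv)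
    have h1 : ∀ l : ℝ, ENNReal.ofReal (G l t v)
        = ENNReal.ofReal (fptDensity v (l*p) * fptDensity (t-v) (l*q))
          * ENNReal.ofReal (fptDensity (T-t) x) := fun l => by
      rw [hG, ← ENNReal.ofReal_mul (mul_nonneg (fpt_nonneg _ _) (fpt_nonneg _ _))]
    simp_rw [h1]
    have hm2 : Measurable (fun l : ℝ =>
        ENNReal.ofReal (fptDensity v (l*p) * fptDensity (t-v) (l*q))) :=
      ENNReal.measurable_ofReal.comp ((fpt_measurable.comp
        (measurable_const.prodMk (measurable_id.mul_const p))).mul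
        (fpt_measurable.comp (measurable_const.prodMk (measurable_id.mul_const q))))
    rw [lintegral_mul_const _ hm2]
    rw [← ofReal_integral_eq_lintegral_ofReal (intble_l hp0 hq0 hv hw)
        (Filter.Eventually.of_forall fun l => mul_nonneg (fpt_nonneg _ _) (fpt_nonneg _ _)),
      integral_l hp0 hq0 hv hw]
    rw [← ENNReal.ofReal_mul (by
      refine mul_nonneg (by positivity) ?_
      exact one_div_nonneg.2 (mul_nonneg hX.le (Real.sqrt_nonneg _)))]
  -- the v-lintegral computation
  have hV : ∀ t ∈ Ioo (0:ℝ) T,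
      (∫⁻ v, ∫⁻ l in Ioi (0:ℝ), ENNReal.ofReal (G l t v))
        = ENNReal.ofReal ((1/Real.sqrt (2*Real.pi*t)) * fptDensity (T-t) x) := by
    intro t ht
    rw [← lintegral_support (s := Ioo (0:ℝ) t) measurableSet_Ioo
      (fun v hv => hK0 t v (by simpa [Set.mem_Ioo] using hv))]
    rw [setLIntegral_congr_fun measurableSet_Ioo
      (fun v hv => hK t v hv.1 hv.2)]
    have hInt : IntegrableOn (fun v => (p*q/(2*Real.sqrt (2*Real.pi))
        * (1/((p^2*(t-v)+q^2*v) * Real.sqrt (p^2*(t-v)+q^2*v)))) * fptDensity (T-t) x)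
        (Ioo (0:ℝ) t) :=
      ((c1_intble hp0 hq0 ht.1).mono_set Ioo_subset_Ioc_self).mul_const _
    have hnn : 0 ≤ᵐ[volume.restrict (Ioo (0:ℝ) t)]
        (fun v => (p*q/(2*Real.sqrt (2*Real.pi))
          * (1/((p^2*(t-v)+q^2*v) * Real.sqrt (p^2*(t-v)+q^2*v)))) * fptDensity (T-t) x) := by
      refine (ae_restrict_iff' measurableSet_Ioo).2 (Filter.Eventually.of_forall fun v hv => ?_)
      have hX : 0 < p^2*(t-v)+q^2*v :=
        add_pos (mul_pos (pow_pos hp0 2) (by linarith [hv.2] : (0:ℝ) < t - v))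
          (mul_pos (pow_pos hq0 2) hv.1)
      refine mul_nonneg (mul_nonneg (by positivity) ?_) (fpt_nonneg _ _)
      exact one_div_nonneg.2 (mul_nonneg hX.le (Real.sqrt_nonneg _))
    rw [← ofReal_integral_eq_lintegral_ofReal hInt hnn]
    congr 1
    rw [MeasureTheory.integral_mul_const, ← MeasureTheory.integral_Ioc_eq_integral_Ioo,
      integral_v hp0 hq0 hpq ht.1]
  have hTzero : ∀ t : ℝ, t ∉ Ioo (0:ℝ) T →
      (∫⁻ v, ∫⁻ l in Ioi (0:ℝ), ENNReal.ofReal (G l t v)) = 0 := by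
    intro t ht
    have hz : ∀ v : ℝ, (∫⁻ l in Ioi (0:ℝ), ENNReal.ofReal (G l t v)) = 0 := by
      intro v
      by_cases hc : 0 < v ∧ v < t
      · have h0t : 0 < t := lt_trans hc.1 hc.2
        have hTt : T ≤ t := by
          by_contra hlt
          exact ht ⟨h0t, not_le.1 hlt⟩
        have hz2 : ∀ l : ℝ, G l t v = 0 := fun l => by
          rw [hG]; simp [fpt_of_nonpos (by linarith : T - t ≤ 0)]
        simp [hz2]
      · exact hK0 t v hc
    simp [hz]
  -- the main lintegral identity, via Tonelli
  have main_lint : (∫⁻ l in Ioi (0:ℝ), ∫⁻ t, ∫⁻ v, ENNReal.ofReal (G l t v))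
      = ENNReal.ofReal (1/Real.sqrt (2*Real.pi*T) * Real.exp (-(x^2)/(2*T))) := by
    have swap1 : (∫⁻ l in Ioi (0:ℝ), ∫⁻ t, ∫⁻ v, ENNReal.ofReal (G l t v))
        = ∫⁻ t, ∫⁻ l in Ioi (0:ℝ), ∫⁻ v, ENNReal.ofReal (G l t v) :=
      lintegral_lintegral_swap measNv.aemeasurable
    have swap2 : (∫⁻ t, ∫⁻ l in Ioi (0:ℝ), ∫⁻ v, ENNReal.ofReal (G l t v))
        = ∫⁻ t, ∫⁻ v, ∫⁻ l in Ioi (0:ℝ), ENNReal.ofReal (G l t v) := by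
      refine lintegral_congr fun t => ?_
      exact lintegral_lintegral_swap (ENNReal.measurable_ofReal.comp (measG.comp
        (measurable_fst.prodMk
          (measurable_const.prodMk measurable_snd)))).aemeasurable
    rw [swap1, swap2,
      ← lintegral_support measurableSet_Ioo hTzero,
      setLIntegral_congr_fun measurableSet_Ioo
        (fun t ht => hV t ht),
      ← ofReal_integral_eq_lintegral_ofReal (intble_t hT hx)
        ((ae_restrict_iff' measurableSet_Ioo).2 (Filter.Eventually.of_forall fun t ht =>
          mul_nonneg (by positivity) (fpt_nonneg _ _))),
      integral_t hT hx]
  -- first conjunct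
  have measM : Measurable (fun l : ℝ => ∫⁻ t, ∫⁻ v, ENNReal.ofReal (G l t v)) :=
    Measurable.lintegral_prod_right' measNv
  have key : (∫ l in Set.Ioi (0:ℝ), ∫ t in (0:ℝ)..T, ∫ v in (0:ℝ)..t, G l t v)
      = 1 / Real.sqrt (2 * Real.pi * T) * Real.exp (-(x ^ 2) / (2 * T)) := by
    rw [setIntegral_congr_fun measurableSet_Ioi (fun l hl => stepB l hl),
      MeasureTheory.integral_eq_lintegral_of_nonneg_ae
        (Filter.Eventually.of_forall fun l => ENNReal.toReal_nonneg)
        (measM.ennreal_toReal).aestronglyMeasurable,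
      setLIntegral_congr_fun measurableSet_Ioi
        (fun l hl => by
          rw [ENNReal.ofReal_toReal (hMfin l hl)]),
      main_lint, ENNReal.toReal_ofReal (by positivity)]
  refine ⟨key, ?_⟩
  have hpull : ∀ l : ℝ, (∫ t in (0:ℝ)..T, ∫ v in (0:ℝ)..t,
      2 * aFun p x * fptDensity v (l * p) * fptDensity (t - v) (l * q)
        * fptDensity (T - t) x)
      = 2 * aFun p x * ∫ t in (0:ℝ)..T, ∫ v in (0:ℝ)..t, G l t v := by
    intro l
    rw [← intervalIntegral.integral_const_mul]
    refine intervalIntegral.integral_congr fun t _ => ?_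
    rw [← intervalIntegral.integral_const_mul]
    refine intervalIntegral.integral_congr fun v _ => ?_
    rw [hG]; ring
  calc (∫ l in Set.Ioi (0:ℝ), ∫ t in (0:ℝ)..T, ∫ v in (0:ℝ)..t,
        2 * aFun p x * fptDensity v (l * p) * fptDensity (t - v) (l * q)
          * fptDensity (T - t) x)
      = ∫ l in Set.Ioi (0:ℝ), 2 * aFun p x * ∫ t in (0:ℝ)..T, ∫ v in (0:ℝ)..t, G l t v := by
        exact setIntegral_congr_fun measurableSet_Ioi fun l _ => hpull l
    _ = 2 * aFun p x * ∫ l in Set.Ioi (0:ℝ), ∫ t in (0:ℝ)..T, ∫ v in (0:ℝ)..t, G l t v :=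
        MeasureTheory.integral_const_mul _ _
    _ = 2 * aFun p x * (1 / Real.sqrt (2 * Real.pi * T) * Real.exp (-(x ^ 2) / (2 * T))) := by
        rw [key]
end

section
/- Fix integers r ≥ 1, 0 ≤ r₁ ≤ r, k ≥ 1, 0 ≤ i ≤ k. The number of paths in A(r, r₁, k, i) satisfies 2^k · |A(r, r₁, k, i)| = C(k, i) · N(2r₁, i) · N(2(r−r₁), k−i), where C(k,i) is the binomial coefficient and N(2d, m) is the number of lattice paths of length 2d from 0 to 0 with unit steps having exactly m returns to the origin. -/
open Finset Filter

/-- The lattice path determined by the step sequence `σ` (`true` = step `+1`,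
`false` = step `−1`), started at `0` and evaluated at time `n`.  Skew random walk
paths of length `N` correspond bijectively to step sequences `σ : Fin N → Bool`. -/
def walk {N : ℕ} (σ : Fin N → Bool) (n : ℕ) : ℤ :=
  ∑ i : Fin N, if (i : ℕ) < n then (if σ i then (1 : ℤ) else -1) else 0

/-- The weight of a skew random walk path: a step from `0` to `1` has weight `p`,
a step from `0` to `−1` has weight `q`, and every other step has weight `1/2`. -/
noncomputable def pathWeight (p q : ℝ) {N : ℕ} (σ : Fin N → Bool) : ℝ :=
  ∏ i ∈ Finset.range N,
    (if walk σ i = 0 then (if walk σ (i + 1) = 1 then p else q) else 1 / 2)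

/-- The number of indices `1 ≤ j ≤ N` with `s j = 0` (the number of cycles of a
path returning to `0` at time `N`). -/
def numZeros {N : ℕ} (σ : Fin N → Bool) : ℕ :=
  ((Finset.Icc 1 N).filter fun j => walk σ j = 0).card

/-- The number of positive cycles: a cycle (segment between consecutive visits
to `0`) is positive iff the path is strictly positive strictly inside it, which,
steps being `±1`, holds iff the cycle starts with a step from `0` to `1`. -/
def numPosCycles {N : ℕ} (σ : Fin N → Bool) : ℕ :=
  ((Finset.range N).filter fun i => walk σ i = 0 ∧ walk σ (i + 1) = 1).card

/-- `V(s)`: the number of indices `0 ≤ i < N` with `s i ≥ 0` and `s (i+1) ≥ 0`. -/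
def numNonnegSteps {N : ℕ} (σ : Fin N → Bool) : ℕ :=
  ((Finset.range N).filter fun i => 0 ≤ walk σ i ∧ 0 ≤ walk σ (i + 1)).card

/-- The set `A(r, r₁, k, i)` of skew random walk paths of length `2r` ending at `0`,
with exactly `k` zeros among times `1,…,2r` (hence `k` cycles), exactly `i` positive
cycles, and `V(s) = 2 r₁`. -/
def setA (r r₁ k i : ℕ) : Finset (Fin (2 * r) → Bool) :=
  Finset.univ.filter fun σ =>
    walk σ (2 * r) = 0 ∧ numZeros σ = k ∧ numPosCycles σ = i ∧ numNonnegSteps σ = 2 * r₁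

/-- `N(2d, m)`: the number of lattice paths of length `2d` from `0` to `0` with
unit steps having exactly `m` returns to the origin. -/
def numPathsWithReturns (d m : ℕ) : ℕ :=
  (Finset.univ.filter fun σ : Fin (2 * d) → Bool =>
    walk σ (2 * d) = 0 ∧ numZeros σ = m).card

lemma walk_zero {N : ℕ} (σ : Fin N → Bool) : walk σ 0 = 0 := by
  simp [walk]

lemma walk_succ {N : ℕ} (σ : Fin N → Bool) (n : ℕ) (h : n < N) :
    walk σ (n + 1) = walk σ n + (if σ ⟨n, h⟩ then 1 else -1) := by
  unfold walk
  have key : ∀ i : Fin N, (if (i : ℕ) < n + 1 then (if σ i then (1 : ℤ) else -1) else 0)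
      = (if (i : ℕ) < n then (if σ i then (1 : ℤ) else -1) else 0)
        + (if i = ⟨n, h⟩ then (if σ i then (1 : ℤ) else -1) else 0) := by
    intro i
    by_cases he : i = ⟨n, h⟩
    · subst he; simp
    · have hne : (i : ℕ) ≠ n := fun hh => he (Fin.ext hh)
      rw [if_neg he, add_zero, if_congr (by omega : ((i : ℕ) < n + 1) ↔ (i : ℕ) < n) rfl rfl]
  rw [Finset.sum_congr rfl fun i _ => key i, Finset.sum_add_distrib]
  congr 1
  rw [Finset.sum_ite_eq' Finset.univ (⟨n, h⟩ : Fin N)]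
  simp

lemma walk_step {N : ℕ} (σ : Fin N → Bool) (n : ℕ) (h : n < N) :
    walk σ (n + 1) = walk σ n + 1 ∨ walk σ (n + 1) = walk σ n - 1 := by
  rw [walk_succ σ n h]; split_ifs <;> [left; right] <;> ring

lemma walk_parity {N : ℕ} (σ : Fin N → Bool) : ∀ n, n ≤ N → (Even (walk σ n) ↔ Even n) := by
  intro n
  induction n with
  | zero => simp [walk_zero]
  | succ m ih =>
    intro h
    have ih' := ih (by omega)
    rcases walk_step σ m (by omega) with h' | h' <;>
      rw [h'] <;>
      simp [Int.even_add_one, Nat.even_add_one, ih (by omega), Int.even_sub, Int.even_add] <;>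
      constructor <;> intro <;> simp_all [Int.even_add_one, parity_simps] <;>
      simp only [← Int.not_even_iff_odd, ← Nat.not_even_iff_odd] at * <;> tauto

lemma walk_congr {N N' : ℕ} (σ : Fin N → Bool) (σ' : Fin N' → Bool) (t : ℕ)
    (ht : t ≤ N) (ht' : t ≤ N')
    (hag : ∀ u, (hu : u < t) → σ ⟨u, by omega⟩ = σ' ⟨u, by omega⟩) :
    walk σ t = walk σ' t := by
  induction t with
  | zero => simp [walk_zero]
  | succ m ih =>
    rw [walk_succ σ m (by omega), walk_succ σ' m (by omega),
      ih (by omega) (by omega) (fun u hu => hag u (by omega)), hag m (by omega)]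

lemma Icc_one_eq_image_range (N : ℕ) :
    Finset.Icc 1 N = Finset.image (· + 1) (Finset.range N) := by
  ext x
  simp only [Finset.mem_Icc, Finset.mem_image, Finset.mem_range]
  constructor
  · rintro ⟨h1, h2⟩; exact ⟨x - 1, by omega, by omega⟩
  · rintro ⟨a, ha, rfl⟩; omega

lemma numZeros_eq_range {N : ℕ} (σ : Fin N → Bool) :
    numZeros σ = ((Finset.range N).filter fun i => walk σ (i + 1) = 0).card := by
  unfold numZeros
  rw [Icc_one_eq_image_range, Finset.filter_image]
  rw [Finset.card_image_of_injective _ (add_left_injective 1)]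

/-- Telescoping: the number of zero *starts* in `[0, N)` equals `numZeros` if the
walk ends at `0`. -/

lemma card_zeroStarts {N : ℕ} (σ : Fin N → Bool) (hN : walk σ N = 0) :
    ((Finset.range N).filter fun i => walk σ i = 0).card = numZeros σ := by
  rw [numZeros_eq_range]
  have tel : (∑ i ∈ Finset.range N,
      ((if walk σ (i + 1) = 0 then (1 : ℤ) else 0) - (if walk σ i = 0 then (1 : ℤ) else 0)))
      = (if walk σ N = 0 then (1 : ℤ) else 0) - (if walk σ 0 = 0 then (1 : ℤ) else 0) :=
    Finset.sum_range_sub (fun i => if walk σ i = 0 then (1 : ℤ) else 0) N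
  rw [hN, walk_zero] at tel
  simp only [if_pos rfl, sub_self] at tel
  rw [Finset.sum_sub_distrib] at tel
  have h1 := Finset.sum_boole (fun i => walk σ (i + 1) = 0) (Finset.range N) (R := ℤ)
  have h2 := Finset.sum_boole (fun i => walk σ i = 0) (Finset.range N) (R := ℤ)
  have : ((((Finset.range N).filter fun i => walk σ (i + 1) = 0).card : ℤ))
      = (((Finset.range N).filter fun i => walk σ i = 0).card : ℤ) := by
    rw [← h1, ← h2]; omega
  exact_mod_cast this.symm

lemma walk_neg {N : ℕ} (σ : Fin N → Bool) (n : ℕ) :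
    walk (fun i => ! σ i) n = - walk σ n := by
  unfold walk
  rw [← Finset.sum_neg_distrib]
  apply Finset.sum_congr rfl
  intro i _
  split_ifs <;> simp_all

lemma numZeros_neg {N : ℕ} (σ : Fin N → Bool) :
    numZeros (fun i => ! σ i) = numZeros σ := by
  unfold numZeros
  congr 1
  apply Finset.filter_congr
  intro j _
  simp [walk_neg, neg_eq_zero]

lemma numPosCycles_le_numZeros {N : ℕ} (σ : Fin N → Bool) (hN : walk σ N = 0) :
    numPosCycles σ ≤ numZeros σ := by
  rw [← card_zeroStarts σ hN]
  apply Finset.card_le_card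
  intro x hx
  simp only [Finset.mem_filter, numPosCycles] at *
  exact ⟨hx.1, hx.2.1⟩

/-- positive cycle starts and negative cycle starts partition the zero starts. -/

lemma posCycles_add_negCycles {N : ℕ} (σ : Fin N → Bool) (hN : walk σ N = 0) :
    numPosCycles σ + numPosCycles (fun i => ! σ i) = numZeros σ := by
  have key : ∀ i ∈ Finset.range N, walk σ i = 0 → (walk σ (i+1) = 1 ∨ walk σ (i+1) = -1) := by
    intro i hi h0
    rcases walk_step σ i (Finset.mem_range.mp hi) with h | h <;> rw [h, h0] <;> simp
  rw [← card_zeroStarts σ hN]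
  have e1 : numPosCycles (fun i => ! σ i)
      = ((Finset.range N).filter fun i => walk σ i = 0 ∧ ¬ (walk σ (i+1) = 1)).card := by
    unfold numPosCycles
    congr 1
    apply Finset.filter_congr
    intro i hi
    simp only [walk_neg, neg_eq_zero, decide_eq_true_eq]
    constructor
    · rintro ⟨h0, h1⟩; exact ⟨h0, by omega⟩
    · rintro ⟨h0, h1⟩
      rcases key i hi h0 with h | h
      · exact absurd h h1
      · exact ⟨h0, by omega⟩
  rw [e1]
  unfold numPosCycles
  rw [← Finset.filter_filter, ← Finset.filter_filter (fun i => walk σ i = 0)]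
  exact Finset.card_filter_add_card_filter_not _

lemma numNonnegSteps_le {N : ℕ} (σ : Fin N → Bool) : numNonnegSteps σ ≤ N := by
  unfold numNonnegSteps
  exact (Finset.card_filter_le _ _).trans (by simp)

lemma one_le_numZeros {N : ℕ} (σ : Fin N → Bool) (hN : walk σ N = 0) (h1 : 1 ≤ N) :
    1 ≤ numZeros σ := by
  have : N ∈ (Finset.Icc 1 N).filter fun j => walk σ j = 0 := by
    simp [Finset.mem_filter, Finset.mem_Icc, h1, hN]
  unfold numZeros
  exact Finset.card_pos.mpr ⟨N, this⟩

def app {N₁ N₂ N : ℕ} (h : N₁ + N₂ = N) (σ₁ : Fin N₁ → Bool) (σ₂ : Fin N₂ → Bool) :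
    Fin N → Bool :=
  fun i => if h' : (i : ℕ) < N₁ then σ₁ ⟨i, h'⟩ else σ₂ ⟨(i : ℕ) - N₁, by omega⟩

def takeF {N₁ N : ℕ} (h : N₁ ≤ N) (σ : Fin N → Bool) : Fin N₁ → Bool :=
  fun i => σ ⟨i, by omega⟩

def dropF {N₁ N₂ N : ℕ} (h : N₁ + N₂ = N) (σ : Fin N → Bool) : Fin N₂ → Bool :=
  fun i => σ ⟨N₁ + i, by omega⟩

lemma walk_app_left {N₁ N₂ N : ℕ} (h : N₁ + N₂ = N) (σ₁ : Fin N₁ → Bool)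
    (σ₂ : Fin N₂ → Bool) (t : ℕ) (ht : t ≤ N₁) :
    walk (app h σ₁ σ₂) t = walk σ₁ t := by
  apply walk_congr _ _ t (by omega) ht
  intro u hu
  simp only [app]
  rw [dif_pos (by omega : u < N₁)]

lemma walk_app_right {N₁ N₂ N : ℕ} (h : N₁ + N₂ = N) (σ₁ : Fin N₁ → Bool)
    (σ₂ : Fin N₂ → Bool) (u : ℕ) (hu : u ≤ N₂) :
    walk (app h σ₁ σ₂) (N₁ + u) = walk σ₁ N₁ + walk σ₂ u := by
  induction u with
  | zero => rw [Nat.add_zero, walk_zero, add_zero, walk_app_left h σ₁ σ₂ N₁ le_rfl]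
  | succ m ih =>
    rw [← Nat.add_assoc, walk_succ _ (N₁ + m) (by omega), walk_succ σ₂ m (by omega),
      ih (by omega)]
    have : app h σ₁ σ₂ ⟨N₁ + m, by omega⟩ = σ₂ ⟨m, by omega⟩ := by
      simp only [app]
      rw [dif_neg (by omega)]
      congr 1
      simp [Fin.ext_iff]
    rw [this, add_assoc]

lemma walk_app_end {N₁ N₂ N : ℕ} (h : N₁ + N₂ = N) (σ₁ : Fin N₁ → Bool)
    (σ₂ : Fin N₂ → Bool) :
    walk (app h σ₁ σ₂) N = walk σ₁ N₁ + walk σ₂ N₂ := by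
  have := walk_app_right h σ₁ σ₂ N₂ le_rfl
  rwa [h] at this

lemma takeF_app {N₁ N₂ N : ℕ} (h : N₁ + N₂ = N) (σ₁ : Fin N₁ → Bool) (σ₂ : Fin N₂ → Bool) :
    takeF (by omega : N₁ ≤ N) (app h σ₁ σ₂) = σ₁ := by
  funext i
  have hi : (i : ℕ) < N₁ := i.2
  simp only [takeF, app]
  rw [dif_pos (show ((⟨(i : ℕ), by omega⟩ : Fin N) : ℕ) < N₁ from hi)]

lemma dropF_app {N₁ N₂ N : ℕ} (h : N₁ + N₂ = N) (σ₁ : Fin N₁ → Bool) (σ₂ : Fin N₂ → Bool) :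
    dropF h (app h σ₁ σ₂) = σ₂ := by
  funext i
  simp only [dropF, app]
  rw [dif_neg (by omega)]
  congr 1
  simp [Fin.ext_iff]

lemma app_takeF_dropF {N₁ N₂ N : ℕ} (h : N₁ + N₂ = N) (σ : Fin N → Bool) :
    app h (takeF (by omega) σ) (dropF h σ) = σ := by
  funext i
  simp only [app, takeF, dropF]
  split_ifs with h'
  · rfl
  · congr 1
    simp [Fin.ext_iff]
    omega

lemma range_split (N₁ N₂ N : ℕ) (h : N₁ + N₂ = N) :
    Finset.range N = Finset.range N₁ ∪ Finset.image (N₁ + ·) (Finset.range N₂) := by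
  ext x
  simp only [Finset.mem_range, Finset.mem_union, Finset.mem_image]
  constructor
  · intro hx
    by_cases h' : x < N₁
    · exact Or.inl h'
    · exact Or.inr ⟨x - N₁, by omega, by omega⟩
  · rintro (h' | ⟨a, ha, rfl⟩) <;> omega

lemma card_filter_app {N₁ N₂ N : ℕ} (h : N₁ + N₂ = N) (σ₁ : Fin N₁ → Bool)
    (σ₂ : Fin N₂ → Bool) (hz : walk σ₁ N₁ = 0)
    (Q : ℤ → ℤ → Prop) [∀ a b, Decidable (Q a b)] :
    ((Finset.range N).filter fun i =>
        Q (walk (app h σ₁ σ₂) i) (walk (app h σ₁ σ₂) (i + 1))).card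
      = ((Finset.range N₁).filter fun i => Q (walk σ₁ i) (walk σ₁ (i + 1))).card
        + ((Finset.range N₂).filter fun i => Q (walk σ₂ i) (walk σ₂ (i + 1))).card := by
  rw [range_split N₁ N₂ N h, Finset.filter_union]
  rw [Finset.card_union_of_disjoint]
  · congr 1
    · apply Finset.card_nbij id
      · intro x hx
        simp only [Finset.mem_coe, Finset.mem_filter, Finset.mem_range, id] at *
        rw [walk_app_left h σ₁ σ₂ x (by omega), walk_app_left h σ₁ σ₂ (x+1) (by omega)] at hx
        exact ⟨hx.1, hx.2⟩
      · intro x hx y hy hxy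
        exact hxy
      · intro x hx
        simp only [Finset.mem_filter, Finset.mem_range, Set.mem_image, Finset.coe_filter,
          Set.mem_setOf_eq] at *
        refine ⟨x, ⟨hx.1, ?_⟩, rfl⟩
        rw [walk_app_left h σ₁ σ₂ x (by omega), walk_app_left h σ₁ σ₂ (x+1) (by omega)]
        exact hx.2
    · rw [Finset.filter_image, Finset.card_image_of_injective _ (add_right_injective N₁)]
      congr 1
      apply Finset.filter_congr
      intro u hu
      have hu' : u < N₂ := Finset.mem_range.mp hu
      have e1 : walk (app h σ₁ σ₂) (N₁ + u) = walk σ₂ u := by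
        rw [walk_app_right h σ₁ σ₂ u (by omega), hz, zero_add]
      have e2 : walk (app h σ₁ σ₂) (N₁ + u + 1) = walk σ₂ (u + 1) := by
        rw [add_assoc, walk_app_right h σ₁ σ₂ (u + 1) (by omega), hz, zero_add]
      rw [e1, e2]
  · rw [Finset.disjoint_left]
    intro a ha hb
    simp only [Finset.mem_filter, Finset.mem_range, Finset.mem_image] at *
    obtain ⟨⟨b, hb', rfl⟩, _⟩ := hb
    omega

lemma numZeros_app {N₁ N₂ N : ℕ} (h : N₁ + N₂ = N) (σ₁ : Fin N₁ → Bool)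
    (σ₂ : Fin N₂ → Bool) (hz : walk σ₁ N₁ = 0) :
    numZeros (app h σ₁ σ₂) = numZeros σ₁ + numZeros σ₂ := by
  rw [numZeros_eq_range, numZeros_eq_range, numZeros_eq_range]
  exact card_filter_app h σ₁ σ₂ hz (fun _ b => b = 0)

lemma numPosCycles_app {N₁ N₂ N : ℕ} (h : N₁ + N₂ = N) (σ₁ : Fin N₁ → Bool)
    (σ₂ : Fin N₂ → Bool) (hz : walk σ₁ N₁ = 0) :
    numPosCycles (app h σ₁ σ₂) = numPosCycles σ₁ + numPosCycles σ₂ :=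
  card_filter_app h σ₁ σ₂ hz (fun a b => a = 0 ∧ b = 1)

lemma numNonnegSteps_app {N₁ N₂ N : ℕ} (h : N₁ + N₂ = N) (σ₁ : Fin N₁ → Bool)
    (σ₂ : Fin N₂ → Bool) (hz : walk σ₁ N₁ = 0) :
    numNonnegSteps (app h σ₁ σ₂) = numNonnegSteps σ₁ + numNonnegSteps σ₂ :=
  card_filter_app h σ₁ σ₂ hz (fun a b => 0 ≤ a ∧ 0 ≤ b)

lemma zeroStarts_eq_singleton {N : ℕ} (σ : Fin N → Bool) (hN : walk σ N = 0)
    (h1 : numZeros σ = 1) (hN1 : 1 ≤ N) :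
    ((Finset.range N).filter fun i => walk σ i = 0) = {0} := by
  have hcard : ((Finset.range N).filter fun i => walk σ i = 0).card = 1 := by
    rw [card_zeroStarts σ hN, h1]
  obtain ⟨a, ha⟩ := Finset.card_eq_one.mp hcard
  have h0 : (0 : ℕ) ∈ (Finset.range N).filter fun i => walk σ i = 0 := by
    simp only [Finset.mem_filter, Finset.mem_range, walk_zero]
    exact ⟨hN1, trivial⟩
  rw [ha] at h0 ⊢
  simp only [Finset.mem_singleton] at h0
  rw [h0]

lemma no_interior_zeros {N : ℕ} (σ : Fin N → Bool) (hN : walk σ N = 0)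
    (h1 : numZeros σ = 1) (hN1 : 1 ≤ N) :
    ∀ t, 0 < t → t < N → walk σ t ≠ 0 := by
  intro t ht htN hz
  have : t ∈ ((Finset.range N).filter fun i => walk σ i = 0) := by
    simp [Finset.mem_filter, Finset.mem_range, htN, hz]
  rw [zeroStarts_eq_singleton σ hN h1 hN1] at this
  simp at this
  omega

lemma excP_interior_pos {N : ℕ} (σ : Fin N → Bool) (hN : walk σ N = 0)
    (h1 : numZeros σ = 1) (hp : numPosCycles σ = 1) (hN1 : 1 ≤ N) :
    ∀ t, 0 < t → t < N → 1 ≤ walk σ t := by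
  have hw1 : walk σ 1 = 1 := by
    obtain ⟨a, ha⟩ := Finset.card_eq_one.mp hp
    have haf : a ∈ (Finset.range N).filter fun i => walk σ i = 0 ∧ walk σ (i + 1) = 1 := by
      rw [ha]; simp
    simp only [Finset.mem_filter, Finset.mem_range] at haf
    have : a ∈ ((Finset.range N).filter fun i => walk σ i = 0) := by
      simp [Finset.mem_filter, Finset.mem_range, haf.1, haf.2.1]
    rw [zeroStarts_eq_singleton σ hN h1 hN1] at this
    simp only [Finset.mem_singleton] at this
    subst this
    exact haf.2.2
  intro t
  induction t with
  | zero => omega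
  | succ m ih =>
    intro _ hmN
    rcases Nat.eq_zero_or_pos m with rfl | hm
    · rw [hw1]
    · have h1' : 1 ≤ walk σ m := ih hm (by omega)
      have hnz : walk σ (m + 1) ≠ 0 := no_interior_zeros σ hN h1 hN1 (m + 1) (by omega) hmN
      rcases walk_step σ m (by omega) with h | h <;> omega

lemma excN_interior_neg {N : ℕ} (σ : Fin N → Bool) (hN : walk σ N = 0)
    (h1 : numZeros σ = 1) (hp : numPosCycles σ = 0) (hN1 : 1 ≤ N) :
    ∀ t, 0 < t → t < N → walk σ t ≤ -1 := by
  have hw1 : walk σ 1 = -1 := by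
    have h0 : (0 : ℕ) ∉ (Finset.range N).filter
        fun i => walk σ i = 0 ∧ walk σ (i + 1) = 1 := by
      rw [Finset.card_eq_zero.mp hp]
      simp
    simp only [Finset.mem_filter, Finset.mem_range, walk_zero, true_and, not_and] at h0
    have := h0 hN1
    rw [Nat.zero_add] at this
    rcases walk_step σ 0 hN1 with h | h <;> rw [Nat.zero_add, walk_zero] at h <;> omega
  intro t
  induction t with
  | zero => omega
  | succ m ih =>
    intro _ hmN
    rcases Nat.eq_zero_or_pos m with rfl | hm
    · rw [hw1]
    · have h1' : walk σ m ≤ -1 := ih hm (by omega)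
      have hnz : walk σ (m + 1) ≠ 0 := no_interior_zeros σ hN h1 hN1 (m + 1) (by omega) hmN
      rcases walk_step σ m (by omega) with h | h <;> omega

lemma excP_numNonnegSteps {N : ℕ} (σ : Fin N → Bool) (hN : walk σ N = 0)
    (h1 : numZeros σ = 1) (hp : numPosCycles σ = 1) (hN1 : 1 ≤ N) :
    numNonnegSteps σ = N := by
  unfold numNonnegSteps
  rw [Finset.filter_true_of_mem, Finset.card_range]
  intro i hi
  have hiN : i < N := Finset.mem_range.mp hi
  constructor
  · rcases Nat.eq_zero_or_pos i with rfl | h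
    · rw [walk_zero]
    · linarith [excP_interior_pos σ hN h1 hp hN1 i h hiN]
  · rcases Nat.lt_or_ge (i + 1) N with h | h
    · linarith [excP_interior_pos σ hN h1 hp hN1 (i + 1) (by omega) h]
    · have hiN' : i + 1 = N := by omega
      rw [hiN', hN]

lemma excN_numNonnegSteps {N : ℕ} (σ : Fin N → Bool) (hN : walk σ N = 0)
    (h1 : numZeros σ = 1) (hp : numPosCycles σ = 0) (hN1 : 1 ≤ N) :
    numNonnegSteps σ = 0 := by
  unfold numNonnegSteps
  rw [Finset.card_eq_zero, Finset.filter_eq_empty_iff]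
  intro i hi
  have hiN : i < N := Finset.mem_range.mp hi
  rcases Nat.eq_zero_or_pos i with rfl | h
  · rintro ⟨-, hc2⟩
    rw [Nat.zero_add] at hc2
    rcases Nat.lt_or_ge 1 N with hN' | hN'
    · have := excN_interior_neg σ hN h1 hp hN1 1 one_pos hN'
      omega
    · have h1N : N = 1 := by omega
      subst h1N
      rcases walk_step σ 0 one_pos with h | h <;>
        rw [Nat.zero_add, walk_zero] at h <;> omega
  · rintro ⟨hc1, -⟩
    linarith [excN_interior_neg σ hN h1 hp hN1 i h hiN]

def excP (j : ℕ) : Finset (Fin (2 * j) → Bool) :=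
  Finset.univ.filter fun σ => walk σ (2 * j) = 0 ∧ numZeros σ = 1 ∧ numPosCycles σ = 1

def excN (j : ℕ) : Finset (Fin (2 * j) → Bool) :=
  Finset.univ.filter fun σ => walk σ (2 * j) = 0 ∧ numZeros σ = 1 ∧ numPosCycles σ = 0

def Ecard (j : ℕ) : ℕ := (excP j).card

lemma card_excN (j : ℕ) : (excN j).card = Ecard j := by
  apply Finset.card_nbij' (fun σ i => ! σ i) (fun σ i => ! σ i)
  · intro σ hσ
    simp only [excN, excP, Finset.mem_coe, Finset.mem_filter, Finset.mem_univ, true_and] at *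
    obtain ⟨h0, h1, hp⟩ := hσ
    have := posCycles_add_negCycles σ h0
    refine ⟨by rw [walk_neg, h0, neg_zero], by rw [numZeros_neg, h1], by omega⟩
  · intro σ hσ
    simp only [excN, excP, Finset.mem_coe, Finset.mem_filter, Finset.mem_univ, true_and] at *
    obtain ⟨h0, h1, hp⟩ := hσ
    have := posCycles_add_negCycles σ h0
    refine ⟨by rw [walk_neg, h0, neg_zero], by rw [numZeros_neg, h1], by omega⟩
  · intro σ _; funext i; simp
  · intro σ _; funext i; simp

def lastZero {N : ℕ} (σ : Fin N → Bool) : ℕ :=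
  Nat.findGreatest (fun t => walk σ t = 0) (N - 1)

lemma lastZero_le {N : ℕ} (σ : Fin N → Bool) : lastZero σ ≤ N - 1 :=
  Nat.findGreatest_le _

lemma walk_lastZero {N : ℕ} (σ : Fin N → Bool) : walk σ (lastZero σ) = 0 :=
  Nat.findGreatest_spec (P := fun t => walk σ t = 0) (Nat.zero_le _) (walk_zero σ)

lemma lastZero_max {N : ℕ} (σ : Fin N → Bool) (t : ℕ) (h1 : lastZero σ < t)
    (h2 : t ≤ N - 1) : walk σ t ≠ 0 :=
  Nat.findGreatest_is_greatest h1 h2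

lemma lastZero_even {N : ℕ} (σ : Fin N → Bool) (hN1 : 1 ≤ N) : Even (lastZero σ) := by
  rw [← walk_parity σ (lastZero σ) (by have := lastZero_le σ; omega), walk_lastZero]
  exact Even.zero

set_option maxHeartbeats 2000000 in

lemma master_split (r j k : ℕ) (hj1 : 1 ≤ j) (hjr : j ≤ r)
    (P : ℕ → ℕ → Prop) [∀ a b : ℕ, Decidable (P a b)] :
    (Finset.univ.filter fun σ : Fin (2 * r) → Bool =>
        walk σ (2 * r) = 0 ∧ numZeros σ = k + 1 ∧ lastZero σ = 2 * (r - j) ∧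
          P (numPosCycles σ) (numNonnegSteps σ)).card
      = (Finset.univ.filter fun p : (Fin (2 * (r - j)) → Bool) × (Fin (2 * j) → Bool) =>
          (walk p.1 (2 * (r - j)) = 0 ∧ numZeros p.1 = k) ∧
          (walk p.2 (2 * j) = 0 ∧ numZeros p.2 = 1) ∧
          P (numPosCycles p.1 + numPosCycles p.2)
            (numNonnegSteps p.1 + numNonnegSteps p.2)).card := by
  have hN : 2 * (r - j) + 2 * j = 2 * r := by omega
  have hle : 2 * (r - j) ≤ 2 * r := by omega
  apply Finset.card_nbij' (fun σ => (takeF hle σ, dropF hN σ))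
      (fun p => app hN p.1 p.2)
  · intro σ hσ
    simp only [Finset.mem_coe, Finset.mem_filter, Finset.mem_univ, true_and] at hσ ⊢
    obtain ⟨h0, hk, hL, hP⟩ := hσ
    have happ : app hN (takeF hle σ) (dropF hN σ) = σ := app_takeF_dropF hN σ
    have hw : walk σ (2 * (r - j)) = 0 := by rw [← hL]; exact walk_lastZero σ
    have hz1 : walk (takeF hle σ) (2 * (r - j)) = 0 := by
      have h' := walk_app_left hN (takeF hle σ) (dropF hN σ) (2 * (r - j)) le_rfl
      rw [happ] at h'
      rw [← h']
      exact hw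
    have hz2 : walk (dropF hN σ) (2 * j) = 0 := by
      have h' := walk_app_end hN (takeF hle σ) (dropF hN σ)
      rw [happ, h0, hz1] at h'
      omega
    have hdrop : ∀ u, u ≤ 2 * j → walk σ (2 * (r - j) + u) = walk (dropF hN σ) u := by
      intro u hu
      have h' := walk_app_right hN (takeF hle σ) (dropF hN σ) u hu
      rw [happ, hz1, zero_add] at h'
      exact h'
    have hnz2 : numZeros (dropF hN σ) = 1 := by
      have hsingle : (Finset.Icc 1 (2 * j)).filter (fun t => walk (dropF hN σ) t = 0)
          = {2 * j} := by
        apply Finset.eq_singleton_iff_unique_mem.mpr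
        constructor
        · simp only [Finset.mem_filter, Finset.mem_Icc]
          exact ⟨⟨by omega, le_rfl⟩, hz2⟩
        · intro u hu
          simp only [Finset.mem_filter, Finset.mem_Icc] at hu
          by_contra hne
          have hu2 : u < 2 * j := by omega
          have e : walk σ (2 * (r - j) + u) = 0 := by
            rw [hdrop u (by omega)]
            exact hu.2
          exact lastZero_max σ (2 * (r - j) + u) (by omega) (by omega) e
      unfold numZeros
      rw [hsingle, Finset.card_singleton]
    have hnzadd := numZeros_app hN (takeF hle σ) (dropF hN σ) hz1
    rw [happ] at hnzadd
    have hposadd := numPosCycles_app hN (takeF hle σ) (dropF hN σ) hz1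
    rw [happ] at hposadd
    have hnnadd := numNonnegSteps_app hN (takeF hle σ) (dropF hN σ) hz1
    rw [happ] at hnnadd
    refine ⟨⟨hz1, by omega⟩, ⟨hz2, hnz2⟩, ?_⟩
    rw [← hposadd, ← hnnadd]
    exact hP
  · intro p hp
    simp only [Finset.mem_coe, Finset.mem_filter, Finset.mem_univ, true_and] at hp ⊢
    obtain ⟨⟨hz1, hnz1⟩, ⟨hz2, hnz2⟩, hP⟩ := hp
    have hend : walk (app hN p.1 p.2) (2 * r) = 0 := by
      rw [walk_app_end hN p.1 p.2, hz1, hz2, add_zero]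
    refine ⟨hend, by rw [numZeros_app hN p.1 p.2 hz1, hnz1, hnz2], ?_, ?_⟩
    · rw [lastZero, Nat.findGreatest_eq_iff]
      refine ⟨by omega, fun _ => ?_, ?_⟩
      · rw [walk_app_left hN p.1 p.2 (2 * (r - j)) le_rfl]
        exact hz1
      · intro n hn hn2 hzn
        have e : walk (app hN p.1 p.2) n = walk p.2 (n - 2 * (r - j)) := by
          have h' := walk_app_right hN p.1 p.2 (n - 2 * (r - j)) (by omega)
          rw [hz1, zero_add] at h'
          rw [← h']
          congr 1
          omega
        exact no_interior_zeros p.2 hz2 hnz2 (by omega) (n - 2 * (r - j)) (by omega)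
          (by omega) (by rw [← e]; exact hzn)
    · rw [numPosCycles_app hN p.1 p.2 hz1, numNonnegSteps_app hN p.1 p.2 hz1]
      exact hP
  · intro σ _
    exact app_takeF_dropF hN σ
  · intro p _
    exact Prod.ext (takeF_app hN p.1 p.2) (dropF_app hN p.1 p.2)

lemma master_T (r j k : ℕ) (hj1 : 1 ≤ j)
    (P : ℕ → ℕ → Prop) [∀ a b : ℕ, Decidable (P a b)] :
    (Finset.univ.filter fun p : (Fin (2 * (r - j)) → Bool) × (Fin (2 * j) → Bool) =>
          (walk p.1 (2 * (r - j)) = 0 ∧ numZeros p.1 = k) ∧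
          (walk p.2 (2 * j) = 0 ∧ numZeros p.2 = 1) ∧
          P (numPosCycles p.1 + numPosCycles p.2)
            (numNonnegSteps p.1 + numNonnegSteps p.2)).card
    = ((Finset.univ.filter fun τ : Fin (2 * (r - j)) → Bool =>
          walk τ (2 * (r - j)) = 0 ∧ numZeros τ = k ∧
            P (numPosCycles τ + 1) (numNonnegSteps τ + 2 * j)).card
        + (Finset.univ.filter fun τ : Fin (2 * (r - j)) → Bool =>
          walk τ (2 * (r - j)) = 0 ∧ numZeros τ = k ∧
            P (numPosCycles τ) (numNonnegSteps τ)).card) * Ecard j := by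
  have hsplit : (Finset.univ.filter fun p : (Fin (2 * (r - j)) → Bool) × (Fin (2 * j) → Bool) =>
          (walk p.1 (2 * (r - j)) = 0 ∧ numZeros p.1 = k) ∧
          (walk p.2 (2 * j) = 0 ∧ numZeros p.2 = 1) ∧
          P (numPosCycles p.1 + numPosCycles p.2)
            (numNonnegSteps p.1 + numNonnegSteps p.2))
      = ((Finset.univ.filter fun τ : Fin (2 * (r - j)) → Bool =>
          walk τ (2 * (r - j)) = 0 ∧ numZeros τ = k ∧
            P (numPosCycles τ + 1) (numNonnegSteps τ + 2 * j)) ×ˢ excP j)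
        ∪ ((Finset.univ.filter fun τ : Fin (2 * (r - j)) → Bool =>
          walk τ (2 * (r - j)) = 0 ∧ numZeros τ = k ∧
            P (numPosCycles τ) (numNonnegSteps τ)) ×ˢ excN j) := by
    ext ⟨τ, e⟩
    simp only [Finset.mem_filter, Finset.mem_univ, true_and, Finset.mem_union,
      Finset.mem_product, excP, excN]
    constructor
    · rintro ⟨⟨hz1, hnz1⟩, ⟨hz2, hnz2⟩, hP⟩
      have hple : numPosCycles e ≤ 1 := by
        have := numPosCycles_le_numZeros e hz2
        omega
      rcases Nat.lt_or_ge (numPosCycles e) 1 with hp | hp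
      · have hp0 : numPosCycles e = 0 := by omega
        right
        have hnn : numNonnegSteps e = 0 :=
          excN_numNonnegSteps e hz2 hnz2 hp0 (by omega)
        rw [hp0, hnn, Nat.add_zero, Nat.add_zero] at hP
        exact ⟨⟨hz1, hnz1, hP⟩, hz2, hnz2, hp0⟩
      · have hp1 : numPosCycles e = 1 := by omega
        left
        have hnn : numNonnegSteps e = 2 * j :=
          excP_numNonnegSteps e hz2 hnz2 hp1 (by omega)
        rw [hp1, hnn] at hP
        exact ⟨⟨hz1, hnz1, hP⟩, hz2, hnz2, hp1⟩
    · rintro (⟨⟨hz1, hnz1, hP⟩, hz2, hnz2, hp1⟩ | ⟨⟨hz1, hnz1, hP⟩, hz2, hnz2, hp0⟩)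
      · have hnn : numNonnegSteps e = 2 * j :=
          excP_numNonnegSteps e hz2 hnz2 hp1 (by omega)
        exact ⟨⟨hz1, hnz1⟩, ⟨hz2, hnz2⟩, by rw [hp1, hnn]; exact hP⟩
      · have hnn : numNonnegSteps e = 0 :=
          excN_numNonnegSteps e hz2 hnz2 hp0 (by omega)
        exact ⟨⟨hz1, hnz1⟩, ⟨hz2, hnz2⟩, by rw [hp0, hnn, Nat.add_zero, Nat.add_zero]; exact hP⟩
  rw [hsplit, Finset.card_union_of_disjoint, Finset.card_product, Finset.card_product,
    card_excN, add_mul]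
  · rfl
  · rw [Finset.disjoint_left]
    rintro ⟨τ, e⟩ h1 h2
    simp only [Finset.mem_product, excP, excN, Finset.mem_filter, Finset.mem_univ,
      true_and] at h1 h2
    omega

lemma grand (r k : ℕ) (hr : 1 ≤ r) (P : ℕ → ℕ → Prop) [∀ a b : ℕ, Decidable (P a b)] :
    (Finset.univ.filter fun σ : Fin (2 * r) → Bool =>
        walk σ (2 * r) = 0 ∧ numZeros σ = k + 1 ∧
          P (numPosCycles σ) (numNonnegSteps σ)).card
    = ∑ j ∈ Finset.Icc 1 r,
        ((Finset.univ.filter fun τ : Fin (2 * (r - j)) → Bool =>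
          walk τ (2 * (r - j)) = 0 ∧ numZeros τ = k ∧
            P (numPosCycles τ + 1) (numNonnegSteps τ + 2 * j)).card
        + (Finset.univ.filter fun τ : Fin (2 * (r - j)) → Bool =>
          walk τ (2 * (r - j)) = 0 ∧ numZeros τ = k ∧
            P (numPosCycles τ) (numNonnegSteps τ)).card) * Ecard j := by
  have hfib : ∀ σ : Fin (2 * r) → Bool,
      σ ∈ (Finset.univ.filter fun σ : Fin (2 * r) → Bool =>
        walk σ (2 * r) = 0 ∧ numZeros σ = k + 1 ∧
          P (numPosCycles σ) (numNonnegSteps σ)) →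
      r - lastZero σ / 2 ∈ Finset.Icc 1 r := by
    intro σ _
    have h1 : lastZero σ ≤ 2 * r - 1 := lastZero_le σ
    have h2 : lastZero σ % 2 = 0 :=
      Nat.even_iff.mp (lastZero_even σ (by omega))
    simp only [Finset.mem_Icc]
    omega
  rw [Finset.card_eq_sum_card_fiberwise hfib]
  apply Finset.sum_congr rfl
  intro j hj
  simp only [Finset.mem_Icc] at hj
  rw [← master_T r j k (by omega) P, ← master_split r j k (by omega) (by omega) P]
  congr 1
  ext σ
  simp only [Finset.mem_filter, Finset.mem_univ, true_and]
  have h1 : lastZero σ ≤ 2 * r - 1 := lastZero_le σ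
  have h2 : lastZero σ % 2 = 0 := Nat.even_iff.mp (lastZero_even σ (by omega))
  constructor
  · rintro ⟨⟨hw, hnz, hP⟩, hfj⟩
    exact ⟨hw, hnz, by omega, hP⟩
  · rintro ⟨hw, hnz, hL, hP⟩
    exact ⟨⟨hw, hnz, hP⟩, by omega⟩

lemma numZeros_of_zero {N : ℕ} (hN : N = 0) (σ : Fin N → Bool) : numZeros σ = 0 := by
  subst hN
  simp [numZeros]

lemma numPathsWithReturns_zero (m : ℕ) :
    numPathsWithReturns 0 m = if m = 0 then 1 else 0 := by
  unfold numPathsWithReturns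
  split_ifs with hm
  · subst hm
    rw [Finset.filter_true_of_mem, Finset.card_univ]
    · simp [Fintype.card_fun]
    · intro σ _
      exact ⟨walk_zero σ, numZeros_of_zero rfl σ⟩
  · rw [Finset.card_eq_zero, Finset.filter_eq_empty_iff]
    intro σ _
    rw [numZeros_of_zero rfl σ]
    tauto

lemma numPathsWithReturns_zero_returns (d : ℕ) (hd : 1 ≤ d) :
    numPathsWithReturns d 0 = 0 := by
  unfold numPathsWithReturns
  rw [Finset.card_eq_zero, Finset.filter_eq_empty_iff]
  intro σ _
  rintro ⟨hw, hnz⟩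
  have := one_le_numZeros σ hw (by omega)
  omega

lemma numPathsWithReturns_rec (d m : ℕ) (hd : 1 ≤ d) :
    numPathsWithReturns d (m + 1)
      = ∑ j ∈ Finset.Icc 1 d, 2 * Ecard j * numPathsWithReturns (d - j) m := by
  have h := grand d m hd (fun _ _ => True)
  have e1 : (Finset.univ.filter fun σ : Fin (2 * d) → Bool =>
        walk σ (2 * d) = 0 ∧ numZeros σ = m + 1 ∧ True)
      = Finset.univ.filter fun σ : Fin (2 * d) → Bool =>
        walk σ (2 * d) = 0 ∧ numZeros σ = m + 1 := by
    apply Finset.filter_congr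
    intro σ _
    simp
  rw [e1] at h
  unfold numPathsWithReturns
  rw [h]
  apply Finset.sum_congr rfl
  intro j hj
  have e2 : ∀ q : (Fin (2 * (d - j)) → Bool) → Prop, ∀ _ : DecidablePred q,
      True := fun _ _ => trivial
  have e3 : (Finset.univ.filter fun τ : Fin (2 * (d - j)) → Bool =>
        walk τ (2 * (d - j)) = 0 ∧ numZeros τ = m ∧ True)
      = Finset.univ.filter fun τ : Fin (2 * (d - j)) → Bool =>
        walk τ (2 * (d - j)) = 0 ∧ numZeros τ = m := by
    apply Finset.filter_congr
    intro τ _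
    simp
  rw [e3]
  ring

lemma numPathsWithReturns_one (d : ℕ) (hd : 1 ≤ d) :
    numPathsWithReturns d 1 = 2 * Ecard d := by
  rw [numPathsWithReturns_rec d 0 hd]
  rw [Finset.sum_eq_single_of_mem d (by simp [Finset.mem_Icc]; omega)]
  · rw [Nat.sub_self, numPathsWithReturns_zero, if_pos rfl, mul_one]
  · intro j hj hne
    simp only [Finset.mem_Icc] at hj
    rw [numPathsWithReturns_zero_returns (d - j) (by omega), mul_zero]

lemma setA_empty_of_big_r₁ (r r₁ k i : ℕ) (h : r < r₁) : (setA r r₁ k i).card = 0 := by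
  rw [setA, Finset.card_eq_zero, Finset.filter_eq_empty_iff]
  intro σ _
  rintro ⟨-, -, -, hnn⟩
  have := numNonnegSteps_le σ
  omega

lemma setA_empty_of_r_zero (r₁ k i : ℕ) (hk : 1 ≤ k) : (setA 0 r₁ k i).card = 0 := by
  rw [setA, Finset.card_eq_zero, Finset.filter_eq_empty_iff]
  intro σ _
  rintro ⟨-, hnz, -, -⟩
  rw [numZeros_of_zero (by omega) σ] at hnz
  omega

lemma setA_empty_of_big_i (r r₁ k i : ℕ) (h : k < i) : (setA r r₁ k i).card = 0 := by
  rw [setA, Finset.card_eq_zero, Finset.filter_eq_empty_iff]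
  intro σ _
  rintro ⟨hw, hnz, hpos, -⟩
  have := numPosCycles_le_numZeros σ hw
  omega

lemma setA_rec (r r₁ k i : ℕ) (hr : 1 ≤ r) :
    (setA r r₁ (k + 1) i).card
      = ∑ j ∈ Finset.Icc 1 r,
        ((Finset.univ.filter fun τ : Fin (2 * (r - j)) → Bool =>
          walk τ (2 * (r - j)) = 0 ∧ numZeros τ = k ∧
            (numPosCycles τ + 1 = i ∧ numNonnegSteps τ + 2 * j = 2 * r₁)).card
        + (setA (r - j) r₁ k i).card) * Ecard j := by
  have h := grand r k hr (fun a b => a = i ∧ b = 2 * r₁)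
  exact h

lemma numPosCycles_of_zero {N : ℕ} (hN : N = 0) (σ : Fin N → Bool) : numPosCycles σ = 0 := by
  subst hN
  simp [numPosCycles]

lemma numNonnegSteps_of_zero {N : ℕ} (hN : N = 0) (σ : Fin N → Bool) :
    numNonnegSteps σ = 0 := by
  subst hN
  simp [numNonnegSteps]

lemma card_filter_fin0_eval (P : ℕ → ℕ → Prop) [∀ a b : ℕ, Decidable (P a b)] (k : ℕ) :
    (Finset.univ.filter fun τ : Fin (2 * 0) → Bool =>
      walk τ (2 * 0) = 0 ∧ numZeros τ = k ∧ P (numPosCycles τ) (numNonnegSteps τ)).card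
      = if k = 0 ∧ P 0 0 then 1 else 0 := by
  have e : (Finset.univ.filter fun τ : Fin (2 * 0) → Bool =>
      walk τ (2 * 0) = 0 ∧ numZeros τ = k ∧ P (numPosCycles τ) (numNonnegSteps τ))
      = Finset.univ.filter fun _ : Fin (2 * 0) → Bool => k = 0 ∧ P 0 0 := by
    apply Finset.filter_congr
    intro τ _
    rw [numZeros_of_zero rfl τ, numPosCycles_of_zero rfl τ, numNonnegSteps_of_zero rfl τ]
    constructor
    · rintro ⟨-, h1, h2⟩; exact ⟨h1.symm, h2⟩
    · rintro ⟨h1, h2⟩; exact ⟨walk_zero τ, h1.symm, h2⟩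
  rw [e, Finset.filter_const]
  split_ifs
  · rw [Finset.card_univ]
    simp
  · rfl

lemma c1_eval (r r₁ k i j : ℕ) (hj : 1 ≤ j) :
    (Finset.univ.filter fun τ : Fin (2 * (r - j)) → Bool =>
      walk τ (2 * (r - j)) = 0 ∧ numZeros τ = k ∧
        (numPosCycles τ + 1 = i ∧ numNonnegSteps τ + 2 * j = 2 * r₁)).card
    = if 1 ≤ i ∧ j ≤ r₁ then (setA (r - j) (r₁ - j) k (i - 1)).card else 0 := by
  split_ifs with hc
  · rw [setA]
    congr 1
    apply Finset.filter_congr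
    intro τ _
    constructor
    · rintro ⟨h1, h2, h3, h4⟩
      exact ⟨h1, h2, by omega, by omega⟩
    · rintro ⟨h1, h2, h3, h4⟩
      exact ⟨h1, h2, by omega, by omega⟩
  · rw [Finset.card_eq_zero, Finset.filter_eq_empty_iff]
    intro τ _
    rintro ⟨-, -, h3, h4⟩
    omega

lemma setA_one (r r₁ i : ℕ) (hr : 1 ≤ r) :
    2 * (setA r r₁ 1 i).card
      = 2 * Ecard r * ((if i = 1 ∧ r₁ = r then 1 else 0) + (if i = 0 ∧ r₁ = 0 then 1 else 0)) := by
  rw [setA_rec r r₁ 0 i hr]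
  rw [Finset.sum_eq_single_of_mem r (by simp [Finset.mem_Icc]; omega)]
  · have e1 : (Finset.univ.filter fun τ : Fin (2 * (r - r)) → Bool =>
        walk τ (2 * (r - r)) = 0 ∧ numZeros τ = 0 ∧
          (numPosCycles τ + 1 = i ∧ numNonnegSteps τ + 2 * r = 2 * r₁)).card
        = if i = 1 ∧ r₁ = r then 1 else 0 := by
      rw [Nat.sub_self]
      rw [card_filter_fin0_eval (fun a b => a + 1 = i ∧ b + 2 * r = 2 * r₁) 0]
      by_cases hc : i = 1 ∧ r₁ = r
      · rw [if_pos (by omega), if_pos hc]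
      · rw [if_neg (by omega), if_neg hc]
    have e2 : (setA (r - r) r₁ 0 i).card = if i = 0 ∧ r₁ = 0 then 1 else 0 := by
      rw [Nat.sub_self, setA]
      rw [card_filter_fin0_eval (fun a b => a = i ∧ b = 2 * r₁) 0]
      by_cases hc : i = 0 ∧ r₁ = 0
      · rw [if_pos (by omega), if_pos hc]
      · rw [if_neg (by omega), if_neg hc]
    rw [e1, e2]
    ring
  · intro j hj hne
    simp only [Finset.mem_Icc] at hj
    have h1 : 1 ≤ r - j := by omega
    have e1 : (Finset.univ.filter fun τ : Fin (2 * (r - j)) → Bool =>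
        walk τ (2 * (r - j)) = 0 ∧ numZeros τ = 0 ∧
          (numPosCycles τ + 1 = i ∧ numNonnegSteps τ + 2 * j = 2 * r₁)).card = 0 := by
      rw [Finset.card_eq_zero, Finset.filter_eq_empty_iff]
      intro τ _
      rintro ⟨hw, hnz, -⟩
      have := one_le_numZeros τ hw (by omega)
      omega
    have e2 : (setA (r - j) r₁ 0 i).card = 0 := by
      rw [setA, Finset.card_eq_zero, Finset.filter_eq_empty_iff]
      intro τ _
      rintro ⟨hw, hnz, -⟩
      have := one_le_numZeros τ hw (by omega)
      omega
    rw [e1, e2]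
    ring

lemma main_base (r r₁ i : ℕ) (hr : 1 ≤ r) (hr₁ : r₁ ≤ r) (hi : i ≤ 1) :
    2 ^ 1 * (setA r r₁ 1 i).card
      = Nat.choose 1 i * numPathsWithReturns r₁ i * numPathsWithReturns (r - r₁) (1 - i) := by
  rw [pow_one, setA_one r r₁ i hr]
  interval_cases i
  · rcases Nat.eq_zero_or_pos r₁ with rfl | h
    · rw [if_neg (by omega), if_pos ⟨rfl, rfl⟩, Nat.choose_zero_right,
        numPathsWithReturns_zero 0, if_pos rfl, Nat.sub_zero, Nat.sub_zero,
        numPathsWithReturns_one r hr]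
      ring
    · rw [if_neg (by omega), if_neg (by omega), numPathsWithReturns_zero_returns r₁ h]
      ring
  · rcases eq_or_lt_of_le hr₁ with heq | h
    · subst heq
      rw [if_pos ⟨rfl, rfl⟩, if_neg (by omega), Nat.choose_self, Nat.sub_self,
        Nat.sub_self, numPathsWithReturns_zero 0, if_pos rfl,
        numPathsWithReturns_one r₁ hr]
      ring
    · rw [if_neg (by omega), if_neg (by omega),
        show 1 - 1 = 0 from rfl, numPathsWithReturns_zero_returns (r - r₁) (by omega)]
      ring

lemma main_step (k : ℕ) (hk : 1 ≤ k)
    (IH : ∀ r r₁ i : ℕ, 1 ≤ r → r₁ ≤ r → i ≤ k →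
      2 ^ k * (setA r r₁ k i).card
        = Nat.choose k i * numPathsWithReturns r₁ i * numPathsWithReturns (r - r₁) (k - i))
    (r r₁ i : ℕ) (hr : 1 ≤ r) (hr₁ : r₁ ≤ r) (hi : i ≤ k + 1) :
    2 ^ (k + 1) * (setA r r₁ (k + 1) i).card
      = Nat.choose (k + 1) i * numPathsWithReturns r₁ i
        * numPathsWithReturns (r - r₁) (k + 1 - i) := by
  have hS1 : ∑ j ∈ Finset.Icc 1 r, 2 * Ecard j *
        (2 ^ k * (if 1 ≤ i ∧ j ≤ r₁ then (setA (r - j) (r₁ - j) k (i - 1)).card else 0))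
      = (if 1 ≤ i then Nat.choose k (i - 1) else 0)
        * (numPathsWithReturns r₁ i * numPathsWithReturns (r - r₁) (k + 1 - i)) := by
    by_cases hi1 : 1 ≤ i
    · rw [if_pos hi1]
      rcases Nat.eq_zero_or_pos r₁ with rfl | hr₁1
      · rw [numPathsWithReturns_zero i, if_neg (by omega)]
        rw [Finset.sum_eq_zero]
        · ring
        · intro j hj
          simp only [Finset.mem_Icc] at hj
          rw [if_neg (by omega)]
          ring
      · have hrec : numPathsWithReturns r₁ i
            = ∑ j ∈ Finset.Icc 1 r₁, 2 * Ecard j * numPathsWithReturns (r₁ - j) (i - 1) := by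
          conv_lhs => rw [show i = i - 1 + 1 by omega]
          exact numPathsWithReturns_rec r₁ (i - 1) hr₁1
        rw [hrec, Finset.sum_mul, Finset.mul_sum]
        rw [show Finset.Icc 1 r = Finset.Ioc 0 r from Finset.Icc_add_one_left_eq_Ioc 0 r,
          ← Finset.Ioc_union_Ioc_eq_Ioc (Nat.zero_le r₁) hr₁,
          Finset.sum_union (by
            rw [Finset.disjoint_left]
            intro a ha hb
            simp only [Finset.mem_Ioc] at ha hb
            omega)]
        have hzero : ∑ j ∈ Finset.Ioc r₁ r, 2 * Ecard j *
            (2 ^ k * (if 1 ≤ i ∧ j ≤ r₁ then (setA (r - j) (r₁ - j) k (i - 1)).card else 0))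
            = 0 := by
          apply Finset.sum_eq_zero
          intro j hj
          simp only [Finset.mem_Ioc] at hj
          rw [if_neg (by omega)]
          ring
        rw [hzero, add_zero,
          show Finset.Ioc 0 r₁ = Finset.Icc 1 r₁ from (Finset.Icc_add_one_left_eq_Ioc 0 r₁).symm]
        apply Finset.sum_congr rfl
        intro j hj
        simp only [Finset.mem_Icc] at hj
        rw [if_pos ⟨hi1, hj.2⟩]
        by_cases hrj : 1 ≤ r - j
        · rw [IH (r - j) (r₁ - j) (i - 1) hrj (by omega) (by omega),
            show (r - j) - (r₁ - j) = r - r₁ by omega, show k - (i - 1) = k + 1 - i by omega]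
          ring
        · rw [show r - j = 0 by omega, setA_empty_of_r_zero _ _ _ hk]
          rcases Nat.lt_or_ge 1 i with hi2 | hi2
          · rw [show r₁ - j = 0 by omega, numPathsWithReturns_zero (i - 1),
              if_neg (by omega)]
            ring
          · rw [show r - r₁ = 0 by omega, numPathsWithReturns_zero (k + 1 - i),
              if_neg (by omega)]
            ring
    · rw [if_neg hi1, zero_mul, Finset.sum_eq_zero]
      intro j hj
      rw [if_neg (by omega)]
      ring
  have hS2 : ∑ j ∈ Finset.Icc 1 r, 2 * Ecard j * (2 ^ k * (setA (r - j) r₁ k i).card)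
      = (if i ≤ k then Nat.choose k i else 0)
        * (numPathsWithReturns r₁ i * numPathsWithReturns (r - r₁) (k + 1 - i)) := by
    by_cases hik : i ≤ k
    · rw [if_pos hik]
      rcases Nat.lt_or_ge r₁ r with hlt | hge
      · have hrec : numPathsWithReturns (r - r₁) (k + 1 - i)
            = ∑ j ∈ Finset.Icc 1 (r - r₁),
                2 * Ecard j * numPathsWithReturns ((r - r₁) - j) (k - i) := by
          rw [show k + 1 - i = (k - i) + 1 by omega]
          exact numPathsWithReturns_rec (r - r₁) (k - i) (by omega)
        rw [hrec, Finset.mul_sum, Finset.mul_sum]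
        rw [show Finset.Icc 1 r = Finset.Ioc 0 r from Finset.Icc_add_one_left_eq_Ioc 0 r,
          ← Finset.Ioc_union_Ioc_eq_Ioc (Nat.zero_le (r - r₁)) (by omega : r - r₁ ≤ r),
          Finset.sum_union (by
            rw [Finset.disjoint_left]
            intro a ha hb
            simp only [Finset.mem_Ioc] at ha hb
            omega)]
        have hzero : ∑ j ∈ Finset.Ioc (r - r₁) r,
            2 * Ecard j * (2 ^ k * (setA (r - j) r₁ k i).card) = 0 := by
          apply Finset.sum_eq_zero
          intro j hj
          simp only [Finset.mem_Ioc] at hj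
          rw [setA_empty_of_big_r₁ _ _ _ _ (by omega)]
          ring
        rw [hzero, add_zero,
          show Finset.Ioc 0 (r - r₁) = Finset.Icc 1 (r - r₁) from
            (Finset.Icc_add_one_left_eq_Ioc 0 (r - r₁)).symm]
        apply Finset.sum_congr rfl
        intro j hj
        simp only [Finset.mem_Icc] at hj
        by_cases hrj : 1 ≤ r - j
        · rw [IH (r - j) r₁ i hrj (by omega) hik, show (r - j) - r₁ = (r - r₁) - j by omega]
          ring
        · have hr₁0 : r₁ = 0 := by omega
          rw [show r - j = 0 by omega, setA_empty_of_r_zero _ _ _ hk]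
          rcases Nat.eq_zero_or_pos i with rfl | hi1
          · rw [show (r - r₁) - j = 0 by omega, numPathsWithReturns_zero (k - 0),
              if_neg (by omega)]
            ring
          · rw [hr₁0, numPathsWithReturns_zero i, if_neg (by omega)]
            ring
      · have heq : r₁ = r := le_antisymm hr₁ hge
        subst heq
        rw [Nat.sub_self, numPathsWithReturns_zero (k + 1 - i), if_neg (by omega)]
        rw [Finset.sum_eq_zero]
        · ring
        · intro j hj
          simp only [Finset.mem_Icc] at hj
          rw [setA_empty_of_big_r₁ _ _ _ _ (by omega)]
          ring
    · rw [if_neg hik, zero_mul, Finset.sum_eq_zero]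
      intro j hj
      rw [setA_empty_of_big_i _ _ _ _ (by omega)]
      ring
  have hPascal : (if 1 ≤ i then Nat.choose k (i - 1) else 0)
      + (if i ≤ k then Nat.choose k i else 0) = Nat.choose (k + 1) i := by
    rcases Nat.eq_zero_or_pos i with rfl | h1
    · simp
    · rcases Nat.lt_or_ge k i with h2 | h2
      · have : i = k + 1 := by omega
        subst this
        rw [if_pos (by omega : 1 ≤ k + 1), if_neg (by omega), Nat.add_sub_cancel,
          Nat.choose_self, Nat.choose_self, add_zero]
      · rw [if_pos (by omega : 1 ≤ i), if_pos h2]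
        obtain ⟨i', rfl⟩ : ∃ i', i = i' + 1 := ⟨i - 1, by omega⟩
        rw [Nat.add_sub_cancel, ← Nat.choose_succ_succ']
  calc 2 ^ (k + 1) * (setA r r₁ (k + 1) i).card
      = ∑ j ∈ Finset.Icc 1 r,
          (2 * Ecard j *
            (2 ^ k * (if 1 ≤ i ∧ j ≤ r₁ then (setA (r - j) (r₁ - j) k (i - 1)).card else 0))
          + 2 * Ecard j * (2 ^ k * (setA (r - j) r₁ k i).card)) := by
        rw [setA_rec r r₁ k i hr, Finset.mul_sum]
        apply Finset.sum_congr rfl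
        intro j hj
        simp only [Finset.mem_Icc] at hj
        rw [c1_eval r r₁ k i j hj.1]
        ring
    _ = _ := by
        rw [Finset.sum_add_distrib, hS1, hS2, ← add_mul, hPascal]
        ring

/-- Counting formula: `2^k · |A(r, r₁, k, i)| = C(k, i) · N(2r₁, i) · N(2(r−r₁), k−i)`. -/
theorem card_setA (r r₁ k i : ℕ) (hr : 1 ≤ r) (hr₁ : r₁ ≤ r) (hk : 1 ≤ k) (hi : i ≤ k) :
    2 ^ k * (setA r r₁ k i).card
      = Nat.choose k i * numPathsWithReturns r₁ i * numPathsWithReturns (r - r₁) (k - i) := by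
  induction k, hk using Nat.le_induction generalizing r r₁ i with
  | base => exact main_base r r₁ i hr hr₁ hi
  | succ k hk IH =>
    exact main_step k hk (fun r' r₁' i' h1 h2 h3 => IH r' r₁' i' h1 h2 h3) r r₁ i hr hr₁ hi
end
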